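/- arXiv:2402.11213 — 16 statements merged into one kernel-verified Lean document; each statement's English description precedes it below -/
import Mathlib

section
/- Let (X, τ, E, I, I*, τ*) be an XEI-process. Then for every K ∈ E, the set of accumulation points of K in the topology τ* equals the set of accumulation points of K in the topology τ. -/
open Set Filter TopologicalSpace

universe u

/-- An ideal of subsets of `X`: closed under subsets and finite unions,
contains `∅` and does not contain `X` itself. -/
def IsSetIdeal {X : Type u} (I : Set (Set X)) : Prop :=
  (∀ S ∈ I, ∀ T : Set X, T ⊆ S → T ∈ I) ∧ (∀ S ∈ I, ∀ T ∈ I, S ∪ T ∈ I) ∧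
    (∅ : Set X) ∈ I ∧ (univ : Set X) ∉ I

/-- An XEI-process `(X, τ, E, I, I*, τ*)`. -/
structure XEIProcess (X : Type u) where
  /-- the topology `τ` -/
  tau : TopologicalSpace X
  /-- the family `E` -/
  E : Set (Set X)
  /-- the ideal `I` -/
  I : Set (Set X)
  /-- the ideal `I*` -/
  Istar : Set (Set X)
  /-- the topology `τ*` -/
  taustar : TopologicalSpace X
  /-- (b) members of `E` are nonempty -/
  E_nonempty : ∀ K ∈ E, K.Nonempty
  /-- (b) `E ⊇ τ \ {∅}` -/
  open_mem_E : ∀ U : Set X, tau.IsOpen U → U.Nonempty → U ∈ E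
  /-- (c) `K ∩ U ∈ E ∪ {∅}` for `K ∈ E`, `U ∈ τ` -/
  E_inter_open : ∀ K ∈ E, ∀ U : Set X, tau.IsOpen U → K ∩ U ∈ E ∨ K ∩ U = ∅
  /-- (d) `I` is an ideal on `X` -/
  I_ideal : IsSetIdeal I
  /-- (d) `I ⊇ [X]^{<ω}` -/
  finite_mem_I : ∀ S : Set X, S.Finite → S ∈ I
  /-- (d) `I ∩ E = ∅` -/
  I_disjoint_E : I ∩ E = ∅
  /-- (e) `I* ⊇ I` -/
  I_subset_Istar : I ⊆ Istar
  /-- (e) `I*` is an ideal on `X` -/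
  Istar_ideal : IsSetIdeal Istar
  /-- (e) `I* ∩ E = ∅` -/
  Istar_disjoint_E : Istar ∩ E = ∅
  /-- (e) `I*` is maximal among ideals disjoint from `E` -/
  Istar_maximal : ∀ J : Set (Set X), IsSetIdeal J → J ∩ E = ∅ → Istar ⊆ J → J = Istar
  /-- (f) `τ*` is the topology with base `{U \ S : U ∈ τ, S ∈ I*}` -/
  taustar_eq : taustar = TopologicalSpace.generateFrom
    {V : Set X | ∃ (U S : Set X), tau.IsOpen U ∧ S ∈ Istar ∧ V = U \ S}

/-- Proposition 2(4): for `K ∈ E`, the accumulation points of `K` in `τ*`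
are exactly the accumulation points of `K` in `τ`. -/
theorem stmt_1 {X : Type u} (P : XEIProcess X) (K : Set X) (hK : K ∈ P.E) :
    {x : X | @AccPt X P.taustar x (𝓟 K)} = {x : X | @AccPt X P.tau x (𝓟 K)} := by
  obtain ⟨hIsub, hIun, hIempty, hIuniv⟩ := P.Istar_ideal
  have hB : @TopologicalSpace.IsTopologicalBasis X P.taustar
      {V : Set X | ∃ U S : Set X, P.tau.IsOpen U ∧ S ∈ P.Istar ∧ V = U \ S} := by
    refine @TopologicalSpace.IsTopologicalBasis.mk X P.taustar _ ?_ ?_ P.taustar_eq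
    · rintro t1 ⟨U1, S1, hU1, hS1, rfl⟩ t2 ⟨U2, S2, hU2, hS2, rfl⟩ x hx
      refine ⟨(U1 ∩ U2) \ (S1 ∪ S2),
        ⟨U1 ∩ U2, S1 ∪ S2, P.tau.isOpen_inter _ _ hU1 hU2, hIun _ hS1 _ hS2, rfl⟩, ?_, ?_⟩
      · exact ⟨⟨hx.1.1, hx.2.1⟩, fun h => h.elim hx.1.2 hx.2.2⟩
      · rintro y ⟨⟨hy1, hy2⟩, hy3⟩
        exact ⟨⟨hy1, fun h => hy3 (Or.inl h)⟩, ⟨hy2, fun h => hy3 (Or.inr h)⟩⟩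
    · apply eq_univ_of_forall
      intro x
      exact ⟨univ \ ∅, ⟨univ, ∅, P.tau.isOpen_univ, hIempty, rfl⟩, by simp⟩
  have hmem : ∀ (x : X) (N : Set X), N ∈ @nhds X P.taustar x ↔
      ∃ V, (∃ U S : Set X, P.tau.IsOpen U ∧ S ∈ P.Istar ∧ V = U \ S) ∧ x ∈ V ∧ V ⊆ N :=
    fun x N => @TopologicalSpace.IsTopologicalBasis.mem_nhds_iff X P.taustar x N _ hB
  ext x
  simp only [mem_setOf_eq]
  rw [@accPt_iff_nhds X P.taustar, @accPt_iff_nhds X P.tau]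
  constructor
  · intro h U hU
    apply h
    have : ∃ V ⊆ U, P.tau.IsOpen V ∧ x ∈ V := by
      letI := P.tau; exact mem_nhds_iff.mp hU
    obtain ⟨V, hVU, hVopen, hxV⟩ := this
    rw [hmem]
    exact ⟨V \ ∅, ⟨V, ∅, hVopen, hIempty, rfl⟩, by simpa using hxV,
      by simpa using hVU⟩
  · intro h N hN
    rw [hmem] at hN
    obtain ⟨V, ⟨U, S, hU, hS, rfl⟩, hxV, hVN⟩ := hN
    by_contra hc
    push_neg at hc
    have hUnhds : U ∈ @nhds X P.tau x := by
      letI := P.tau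
      have hU' : IsOpen U := hU
      exact hU'.mem_nhds hxV.1
    obtain ⟨y, ⟨hyU, hyK⟩, hyx⟩ := h U hUnhds
    have hKU : K ∩ U ∈ P.E := by
      rcases P.E_inter_open K hK U hU with h' | h'
      · exact h'
      · exact absurd h' (Nonempty.ne_empty ⟨y, hyK, hyU⟩)
    have hsub : K ∩ U ⊆ S ∪ {x} := by
      rintro z ⟨hzK, hzU⟩
      by_cases hzS : z ∈ S
      · exact Or.inl hzS
      · exact Or.inr (hc z ⟨hVN ⟨hzU, hzS⟩, hzK⟩)
    have hSx : S ∪ {x} ∈ P.Istar :=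
      hIun _ hS _ (P.I_subset_Istar (P.finite_mem_I _ (finite_singleton x)))
    have hKUI : K ∩ U ∈ P.Istar := hIsub _ hSx _ hsub
    have : K ∩ U ∈ P.Istar ∩ P.E := ⟨hKUI, hKU⟩
    rw [P.Istar_disjoint_E] at this
    exact this
end

section
/- Let (X, τ, E, I, I*, τ*) be an XEI-process and suppose that I contains every subset of X of cardinality strictly less than Δ(X, τ). Then Δ(X, τ*) = Δ(X, τ). -/
open Set Filter TopologicalSpace

universe u

/-- The dispersion character `Δ(X, t)`: the minimal cardinality of a nonempty `t`-open set. -/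
noncomputable def dispersion {X : Type u} (t : TopologicalSpace X) : Cardinal.{u} :=
  sInf {c : Cardinal.{u} | ∃ U : Set X, t.IsOpen U ∧ U.Nonempty ∧ c = Cardinal.mk U}

/-- Proposition 2(5): if `I ⊇ [X]^{<Δ(τ)}`, then `Δ(τ*) = Δ(τ)`. -/
theorem stmt_2 {X : Type u} (P : XEIProcess X)
    (h : ∀ S : Set X, Cardinal.mk S < dispersion P.tau → S ∈ P.I) :
    dispersion P.taustar = dispersion P.tau := by
  obtain ⟨Isub, Iun, Iempty, Iuniv⟩ := P.I_ideal
  obtain ⟨Ssub, Sun, Sempty, Suniv⟩ := P.Istar_ideal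
  have hXne : Nonempty X := by
    by_contra hx
    rw [not_nonempty_iff] at hx
    exact Iuniv (by simpa [Set.eq_empty_of_isEmpty] using Iempty)
  set B : Set (Set X) := {V : Set X | ∃ (U S : Set X), P.tau.IsOpen U ∧ S ∈ P.Istar ∧ V = U \ S}
    with hBdef
  -- members of B are τ*-open
  have hBopen : ∀ V ∈ B, P.taustar.IsOpen V := by
    intro V hV
    rw [P.taustar_eq]
    exact TopologicalSpace.GenerateOpen.basic _ hV
  have hopen_taustar : ∀ U : Set X, P.tau.IsOpen U → P.taustar.IsOpen U := by
    intro U hU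
    have : U ∈ B := ⟨U, ∅, hU, Sempty, (Set.diff_empty).symm⟩
    exact hBopen U this
  -- key: nonempty members of B have cardinality ≥ Δ(τ)
  have key : ∀ V ∈ B, V.Nonempty → dispersion P.tau ≤ Cardinal.mk V := by
    rintro V ⟨U, S, hU, hS, rfl⟩ hne
    by_contra hlt
    push_neg at hlt
    have hmem : (U \ S) ∈ P.Istar := P.I_subset_Istar (h _ hlt)
    have hUsub : U ⊆ (U \ S) ∪ S := by
      intro x hx
      by_cases hxS : x ∈ S
      · exact Or.inr hxS
      · exact Or.inl ⟨hx, hxS⟩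
    have hU' : U ∈ P.Istar := Ssub _ (Sun _ hmem _ hS) _ hUsub
    have hUE : U ∈ P.E := P.open_mem_E U hU (hne.mono Set.diff_subset)
    have hcon : U ∈ P.Istar ∩ P.E := ⟨hU', hUE⟩
    rw [P.Istar_disjoint_E] at hcon
    exact hcon
  -- B is a basis for τ*
  letI := P.taustar
  have hB : TopologicalSpace.IsTopologicalBasis B := by
    refine ⟨?_, ?_, P.taustar_eq⟩
    · rintro t₁ ⟨U₁, S₁, hU₁, hS₁, rfl⟩ t₂ ⟨U₂, S₂, hU₂, hS₂, rfl⟩ x hx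
      refine ⟨(U₁ ∩ U₂) \ (S₁ ∪ S₂), ⟨U₁ ∩ U₂, S₁ ∪ S₂,
        P.tau.isOpen_inter _ _ hU₁ hU₂, Sun _ hS₁ _ hS₂, rfl⟩, ?_, ?_⟩
      · simp only [Set.mem_inter_iff, Set.mem_diff] at hx
        simp only [Set.mem_diff, Set.mem_inter_iff, Set.mem_union]
        tauto
      · intro y hy
        simp only [Set.mem_diff, Set.mem_inter_iff, Set.mem_union] at hy
        simp only [Set.mem_inter_iff, Set.mem_diff]
        tauto
    · apply Set.eq_univ_of_univ_subset
      intro x _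
      exact ⟨Set.univ, ⟨Set.univ, ∅, P.tau.isOpen_univ, Sempty, (Set.diff_empty).symm⟩,
        Set.mem_univ x⟩
  -- the two index sets
  have hDtau_ne : {c : Cardinal.{u} | ∃ U : Set X, P.tau.IsOpen U ∧ U.Nonempty ∧
      c = Cardinal.mk U}.Nonempty :=
    ⟨Cardinal.mk (Set.univ : Set X), Set.univ, P.tau.isOpen_univ,
      Set.univ_nonempty, rfl⟩
  have hDstar_ne : {c : Cardinal.{u} | ∃ U : Set X, P.taustar.IsOpen U ∧ U.Nonempty ∧
      c = Cardinal.mk U}.Nonempty :=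
    ⟨Cardinal.mk (Set.univ : Set X), Set.univ,
      hopen_taustar _ P.tau.isOpen_univ, Set.univ_nonempty, rfl⟩
  apply le_antisymm
  · -- Δ(τ*) ≤ Δ(τ)
    apply le_csInf hDtau_ne
    rintro c ⟨U, hU, hne, rfl⟩
    exact csInf_le' ⟨U, hopen_taustar U hU, hne, rfl⟩
  · -- Δ(τ) ≤ Δ(τ*)
    apply le_csInf hDstar_ne
    rintro c ⟨V, hV, hne, rfl⟩
    obtain ⟨x, hx⟩ := hne
    obtain ⟨W, hWB, hxW, hWV⟩ :=
      hB.exists_subset_of_mem_open hx hV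
    calc dispersion P.tau ≤ Cardinal.mk W := key W hWB ⟨x, hxW⟩
      _ ≤ Cardinal.mk V := Cardinal.mk_le_mk_of_subset hWV
end

section
/- Let (X, τ, E, I, I*, τ*) be an XEI-process with E = τ \ {∅}. Then the space (X, τ*) is submaximal. -/
open Set Filter TopologicalSpace

universe u

/-- Example: if `E = τ \ {∅}`, then `(X, τ*)` is submaximal
(every `τ*`-dense set is `τ*`-open). -/
theorem stmt_3 {X : Type u} (P : XEIProcess X)
    (hE : P.E = {U : Set X | P.tau.IsOpen U ∧ U.Nonempty}) :
    ∀ D : Set X, @Dense X P.taustar D → P.taustar.IsOpen D := by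
  intro D hD
  letI : TopologicalSpace X := P.taustar
  obtain ⟨Isub, Iun, Iempty, Iuniv⟩ := P.Istar_ideal
  -- every nonempty τ*-open set meets D
  have hmeet : ∀ U : Set X, IsOpen U → U.Nonempty → (U ∩ D).Nonempty :=
    dense_iff_inter_open.mp hD
  -- basic sets are τ*-open
  have hbasic : ∀ U T : Set X, P.tau.IsOpen U → T ∈ P.Istar → IsOpen (U \ T) := by
    intro U T hU hT
    show P.taustar.IsOpen (U \ T)
    rw [P.taustar_eq]
    exact TopologicalSpace.GenerateOpen.basic _ ⟨U, T, hU, hT, rfl⟩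
  -- the ideal generated by I* and Dᶜ
  set J : Set (Set X) := {S | ∃ T ∈ P.Istar, S ⊆ Dᶜ ∪ T} with hJ
  have hJE : J ∩ P.E = ∅ := by
    ext K
    simp only [mem_inter_iff, mem_empty_iff_false, iff_false, not_and]
    rintro ⟨T, hT, hKT⟩ hKE
    rw [hE] at hKE
    obtain ⟨hKopen, hKne⟩ := hKE
    have hKTne : (K \ T).Nonempty := by
      rcases (K \ T).eq_empty_or_nonempty with h | h
      · exfalso
        have : K ⊆ T := diff_eq_empty.mp h
        have hKI : K ∈ P.Istar := Isub T hT K this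
        have : K ∈ P.Istar ∩ P.E := ⟨hKI, by rw [hE]; exact ⟨hKopen, hKne⟩⟩
        rw [P.Istar_disjoint_E] at this
        exact this
      · exact h
    obtain ⟨x, hx1, hx2⟩ := hmeet (K \ T) (hbasic K T hKopen hT) hKTne
    -- x ∈ K \ T and x ∈ D, but K ⊆ Dᶜ ∪ T
    rcases hKT hx1.1 with h | h
    · exact h hx2
    · exact hx1.2 h
  have hIJ : P.Istar ⊆ J := fun S hS => ⟨S, hS, fun x hx => Or.inr hx⟩
  have hJideal : IsSetIdeal J := by
    refine ⟨?_, ?_, ⟨∅, Iempty, by simp⟩, ?_⟩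
    · rintro S ⟨T, hT, hST⟩ S' hS'
      exact ⟨T, hT, hS'.trans hST⟩
    · rintro S ⟨T, hT, hST⟩ S' ⟨T', hT', hST'⟩
      refine ⟨T ∪ T', Iun T hT T' hT', ?_⟩
      rintro x (hx | hx)
      · rcases hST hx with h | h
        · exact Or.inl h
        · exact Or.inr (Or.inl h)
      · rcases hST' hx with h | h
        · exact Or.inl h
        · exact Or.inr (Or.inr h)
    · intro huniv
      have : (univ : Set X) ∈ J ∩ P.E := by
        refine ⟨huniv, ?_⟩
        rw [hE]
        refine ⟨P.tau.isOpen_univ, ?_⟩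
        rcases isEmpty_or_nonempty X with h | h
        · exfalso
          exact Iuniv (by rw [univ_eq_empty_iff.mpr h]; exact Iempty)
        · exact univ_nonempty
      rw [hJE] at this
      exact this
  have hJeq : J = P.Istar := P.Istar_maximal J hJideal hJE hIJ
  have hDc : Dᶜ ∈ P.Istar := by
    rw [← hJeq]
    exact ⟨∅, Iempty, fun x hx => Or.inl hx⟩
  have : D = univ \ Dᶜ := by simp
  rw [this]
  exact hbasic univ Dᶜ P.tau.isOpen_univ hDc
end

section
/- Let (X, τ, E, I, I*, τ*) be an XEI-process, let A ⊆ X and let x ∈ X. Then x is an accumulation point of A in the topology τ* if and only if for every U ∈ τ with x ∈ U there exists a set K ∈ E such that K ⊆ U and K \ A ∈ I*. -/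
open Set Filter TopologicalSpace

universe u

/-- Lemma 3: `x ∈ A*` iff whenever `x ∈ U ∈ τ` there is `K ∈ E` with
`K ⊆ U` and `K \ A ∈ I*`. -/
theorem stmt_4 {X : Type u} (P : XEIProcess X) (A : Set X) (x : X) :
    @AccPt X P.taustar x (𝓟 A) ↔
      ∀ U : Set X, P.tau.IsOpen U → x ∈ U →
        ∃ K ∈ P.E, K ⊆ U ∧ K \ A ∈ P.Istar := by
  letI : TopologicalSpace X := P.taustar
  have hEI : ∀ K ∈ P.E, K ∉ P.Istar := by
    intro K hK hK'
    have : K ∈ P.Istar ∩ P.E := ⟨hK', hK⟩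
    rw [P.Istar_disjoint_E] at this
    exact this
  have hunivE : (univ : Set X) ∈ P.E := by
    apply P.open_mem_E _ P.tau.isOpen_univ
    by_contra h
    rw [Set.not_nonempty_iff_eq_empty] at h
    exact P.I_ideal.2.2.2 (by rw [h]; exact P.I_ideal.2.2.1)
  have hmax : ∀ S : Set X, S ∉ P.Istar → ∃ K ∈ P.E, ∃ T ∈ P.Istar, K ⊆ S ∪ T := by
    intro S hS
    by_contra h
    push_neg at h
    have hJideal : IsSetIdeal {T' : Set X | ∃ T ∈ P.Istar, T' ⊆ S ∪ T} := by
      refine ⟨?_, ?_, ?_, ?_⟩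
      · rintro T' ⟨T, hT, hsub⟩ T'' hsub'
        exact ⟨T, hT, hsub'.trans hsub⟩
      · rintro T₁ ⟨T, hT, h1⟩ T₂ ⟨T', hT', h2⟩
        refine ⟨T ∪ T', P.Istar_ideal.2.1 _ hT _ hT', ?_⟩
        intro y hy
        rcases hy with hy | hy
        · rcases h1 hy with hy' | hy'
          · exact Or.inl hy'
          · exact Or.inr (Or.inl hy')
        · rcases h2 hy with hy' | hy'
          · exact Or.inl hy'
          · exact Or.inr (Or.inr hy')
      · exact ⟨∅, P.Istar_ideal.2.2.1, by simp⟩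
      · rintro ⟨T, hT, hsub⟩
        exact h univ hunivE T hT hsub
    have hJE : {T' : Set X | ∃ T ∈ P.Istar, T' ⊆ S ∪ T} ∩ P.E = ∅ := by
      ext K
      simp only [mem_inter_iff, mem_empty_iff_false, iff_false, not_and, mem_setOf_eq]
      rintro ⟨T, hT, hsub⟩ hKE
      exact h K hKE T hT hsub
    have hIJ : P.Istar ⊆ {T' : Set X | ∃ T ∈ P.Istar, T' ⊆ S ∪ T} :=
      fun T hT => ⟨T, hT, subset_union_right⟩
    have heq := P.Istar_maximal _ hJideal hJE hIJ
    apply hS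
    rw [← heq]
    exact ⟨∅, P.Istar_ideal.2.2.1, by simp⟩
  have hbasis : IsTopologicalBasis
      {V : Set X | ∃ U S : Set X, P.tau.IsOpen U ∧ S ∈ P.Istar ∧ V = U \ S} := by
    refine ⟨?_, ?_, P.taustar_eq⟩
    · rintro t₁ ⟨U₁, S₁, hU₁, hS₁, rfl⟩ t₂ ⟨U₂, S₂, hU₂, hS₂, rfl⟩ y hy
      refine ⟨(U₁ ∩ U₂) \ (S₁ ∪ S₂),
        ⟨U₁ ∩ U₂, S₁ ∪ S₂, P.tau.isOpen_inter _ _ hU₁ hU₂,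
          P.Istar_ideal.2.1 _ hS₁ _ hS₂, rfl⟩, ?_, ?_⟩
      · exact ⟨⟨hy.1.1, hy.2.1⟩, fun hs => hs.elim hy.1.2 hy.2.2⟩
      · rintro z ⟨⟨hz1, hz2⟩, hz3⟩
        exact ⟨⟨hz1, fun hs => hz3 (Or.inl hs)⟩, ⟨hz2, fun hs => hz3 (Or.inr hs)⟩⟩
    · apply eq_univ_of_univ_subset
      rintro y -
      exact ⟨univ \ ∅, ⟨univ, ∅, P.tau.isOpen_univ, P.Istar_ideal.2.2.1, rfl⟩, by simp⟩
  rw [accPt_iff_nhds]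
  constructor
  · intro hacc U hU hxU
    have hS0 : (U ∩ A) \ {x} ∉ P.Istar := by
      intro hmem
      have hnb : U \ ((U ∩ A) \ {x}) ∈ nhds x :=
        hbasis.mem_nhds ⟨U, _, hU, hmem, rfl⟩ ⟨hxU, fun hs => hs.2 rfl⟩
      obtain ⟨y, hy, hyx⟩ := hacc _ hnb
      exact hy.1.2 ⟨⟨hy.1.1, hy.2⟩, hyx⟩
    obtain ⟨K, hKE, T, hT, hKsub⟩ := hmax _ hS0
    have hKU : K ∩ U ≠ ∅ := by
      intro hempty
      apply hEI K hKE
      apply P.Istar_ideal.1 _ hT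
      intro y hyK
      rcases hKsub hyK with hy | hy
      · exact absurd (eq_empty_iff_forall_notMem.mp hempty y) (by
          intro hcon; exact hcon ⟨hyK, hy.1.1⟩)
      · exact hy
    have hKE' : K ∩ U ∈ P.E := (P.E_inter_open K hKE U hU).resolve_right hKU
    refine ⟨K ∩ U, hKE', inter_subset_right, ?_⟩
    apply P.Istar_ideal.1 _ hT
    rintro y ⟨⟨hyK, hyU⟩, hyA⟩
    rcases hKsub hyK with hy | hy
    · exact absurd hy.1.2 (fun h' => hyA h')
    · exact hy
  · intro h U hUnb
    obtain ⟨V, ⟨W, S, hW, hS, rfl⟩, hxV, hVU⟩ := hbasis.mem_nhds_iff.mp hUnb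
    obtain ⟨K, hKE, hKW, hKA⟩ := h W hW hxV.1
    have hT : S ∪ ({x} ∪ (K \ A)) ∈ P.Istar :=
      P.Istar_ideal.2.1 _ hS _
        (P.Istar_ideal.2.1 _ (P.I_subset_Istar (P.finite_mem_I _ (finite_singleton x))) _ hKA)
    have hns : ¬ K ⊆ S ∪ ({x} ∪ (K \ A)) := fun hsub =>
      hEI K hKE (P.Istar_ideal.1 _ hT _ hsub)
    obtain ⟨y, hyK, hyN⟩ := not_subset.mp hns
    refine ⟨y, ⟨hVU ⟨hKW hyK, fun hyS => hyN (Or.inl hyS)⟩, ?_⟩,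
      fun hyx => hyN (Or.inr (Or.inl hyx))⟩
    by_contra hyA
    exact hyN (Or.inr (Or.inr ⟨hyK, hyA⟩))
end

section
/- Let (X, τ, E, I, I*, τ*) be an XEI-process and let κ be a cardinal such that the family E satisfies property (A_κ). Then the ideal I* is κ-saturated. -/
open Set Filter TopologicalSpace

universe u

/-- The property (A_κ): among any `κ` many members of the family there are two distinct ones
whose intersection contains a member of the family. -/
def PropertyA {X : Type u} (E : Set (Set X)) (κ : Cardinal.{u}) : Prop :=
  ∀ H ⊆ E, Cardinal.mk H = κ → ∃ K ∈ H, ∃ L ∈ H, K ≠ L ∧ ∃ M ∈ E, M ⊆ K ∩ L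

/-- An ideal `J` is `κ`-saturated: any `κ` many sets with pairwise intersections in `J`
contain a member of `J`. -/
def IsSaturated {X : Type u} (J : Set (Set X)) (κ : Cardinal.{u}) : Prop :=
  ∀ 𝒜 : Set (Set X), Cardinal.mk 𝒜 = κ →
    (∀ A ∈ 𝒜, ∀ B ∈ 𝒜, A ≠ B → A ∩ B ∈ J) → ∃ A ∈ 𝒜, A ∈ J

/-- Lemma 4(1): if `E` satisfies (A_κ), then `I*` is `κ`-saturated. -/
theorem stmt_5 {X : Type u} (P : XEIProcess X) (κ : Cardinal.{u})
    (hA : PropertyA P.E κ) : IsSaturated P.Istar κ := by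
  intro 𝒜 hcard hpair
  by_contra h
  push_neg at h
  obtain ⟨hIsub, hIun, hIempty, hIuniv⟩ := P.Istar_ideal
  have hXne : (univ : Set X).Nonempty := by
    by_contra hne
    rw [not_nonempty_iff_eq_empty] at hne
    exact hIuniv (hne ▸ hIempty)
  have huniE : (univ : Set X) ∈ P.E := P.open_mem_E univ P.tau.isOpen_univ hXne
  have key : ∀ A ∈ 𝒜, ∃ K ∈ P.E, ∃ S ∈ P.Istar, K ⊆ A ∪ S := by
    intro A hA
    by_contra hK
    push_neg at hK
    set J : Set (Set X) := {T | ∃ S ∈ P.Istar, T ⊆ A ∪ S} with hJdef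
    have hJE : J ∩ P.E = ∅ := by
      ext K
      simp only [mem_inter_iff, mem_empty_iff_false, iff_false, not_and]
      rintro ⟨S, hS, hsub⟩ hKE
      exact (hK K hKE S hS) hsub
    have hJideal : IsSetIdeal J := by
      refine ⟨?_, ?_, ?_, ?_⟩
      · rintro T ⟨S, hS, hsub⟩ T' hT'
        exact ⟨S, hS, hT'.trans hsub⟩
      · rintro T ⟨S, hS, hsub⟩ T' ⟨S', hS', hsub'⟩
        refine ⟨S ∪ S', hIun S hS S' hS', ?_⟩
        intro x hx
        rcases hx with hx | hx
        · rcases hsub hx with h1 | h1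
          · exact Or.inl h1
          · exact Or.inr (Or.inl h1)
        · rcases hsub' hx with h1 | h1
          · exact Or.inl h1
          · exact Or.inr (Or.inr h1)
      · exact ⟨∅, hIempty, by simp⟩
      · intro hu
        have : (univ : Set X) ∈ J ∩ P.E := ⟨hu, huniE⟩
        rw [hJE] at this
        exact this
    have heq := P.Istar_maximal J hJideal hJE
      (fun S hS => ⟨S, hS, subset_union_right⟩)
    have hAJ : A ∈ J := ⟨∅, hIempty, by simp⟩
    rw [heq] at hAJ
    exact h A hA hAJ
  choose! K hKE S hSI hKsub using key
  have hsmall : ∀ A ∈ 𝒜, ∀ B ∈ 𝒜, A ≠ B → ∀ M : Set X, M ⊆ K A ∩ K B → M ∈ P.Istar := by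
    intro A hA B hB hne M hM
    have hIAB : A ∩ B ∈ P.Istar := hpair A hA B hB hne
    have hsub : M ⊆ (A ∩ B) ∪ (S A ∪ S B) := by
      intro x hx
      have hx1 := hKsub A hA (hM hx).1
      have hx2 := hKsub B hB (hM hx).2
      rcases hx1 with h1 | h1
      · rcases hx2 with h2 | h2
        · exact Or.inl ⟨h1, h2⟩
        · exact Or.inr (Or.inr h2)
      · exact Or.inr (Or.inl h1)
    exact hIsub _ (hIun _ hIAB _ (hIun _ (hSI A hA) _ (hSI B hB))) _ hsub
  have hinjOn : InjOn K 𝒜 := by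
    intro A hA B hB hKeq
    by_contra hne
    have hKI : K A ∈ P.Istar := hsmall A hA B hB hne (K A)
      (subset_inter (subset_refl _) (hKeq ▸ subset_refl _))
    have : K A ∈ P.Istar ∩ P.E := ⟨hKI, hKE A hA⟩
    rw [P.Istar_disjoint_E] at this
    exact this
  have hHsub : K '' 𝒜 ⊆ P.E := by
    rintro _ ⟨A, hA, rfl⟩
    exact hKE A hA
  have hHcard : Cardinal.mk (K '' 𝒜) = κ := by
    rw [Cardinal.mk_image_eq_of_injOn K 𝒜 hinjOn, hcard]
  obtain ⟨K1, hK1, K2, hK2, hK12, M, hME, hMsub⟩ := hA (K '' 𝒜) hHsub hHcard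
  obtain ⟨A, hAmem, rfl⟩ := hK1
  obtain ⟨B, hBmem, rfl⟩ := hK2
  have hABne : A ≠ B := fun hab => hK12 (hab ▸ rfl)
  have hMI : M ∈ P.Istar := hsmall A hAmem B hBmem hABne M hMsub
  have : M ∈ P.Istar ∩ P.E := ⟨hMI, hME⟩
  rw [P.Istar_disjoint_E] at this
  exact this
end

section
/- Let (X, τ, E, I, I*, τ*) be an XEI-process and let κ be a cardinal such that the family E satisfies property (A_κ). Then for every family (A_α)_{α<κ} of pairwise disjoint subsets of X there exists α < κ such that A_α has no accumulation points in the topology τ*. -/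
open Set Filter TopologicalSpace

universe u

/-!
If `A_i` has a `τ*`-accumulation point `x_i`, then `A_i \ {x_i} ∉ I*`, since otherwise its
complement would be a `τ*`-neighbourhood of `x_i` missing it. By maximality of `I*`, the ideal
generated by `I*` and `A_i \ {x_i}` meets `E`: some `K_i ∈ E` lies in `A_i ∪ S_i` with
`S_i ∈ I*`. For `i ≠ j` disjointness gives `K_i ∩ K_j ⊆ S_i ∪ S_j ∈ I*`, so no member of `E`
fits inside `K_i ∩ K_j`, and `K_i ≠ K_j`. The `κ` many sets `K_i` then contradict (A_κ).
-/

namespace IsSetIdeal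

variable {X : Type u} {I : Set (Set X)}

lemma empty_mem (hI : IsSetIdeal I) : ∅ ∈ I :=
  hI.2.2.1

lemma union_mem (hI : IsSetIdeal I) {S T : Set X} (hS : S ∈ I) (hT : T ∈ I) : S ∪ T ∈ I :=
  hI.2.1 S hS T hT

lemma mem_of_subset (hI : IsSetIdeal I) {S T : Set X} (hS : S ∈ I) (hTS : T ⊆ S) : T ∈ I :=
  hI.1 S hS T hTS

lemma adjoin (hI : IsSetIdeal I) (T : Set X) (huniv : ∀ S ∈ I, ¬ univ ⊆ T ∪ S) :
    IsSetIdeal {Z | ∃ S ∈ I, Z ⊆ T ∪ S} := by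
  refine ⟨?_, ?_, ⟨∅, hI.empty_mem, empty_subset _⟩, fun ⟨S, hS, h⟩ => huniv S hS h⟩
  · rintro Z ⟨S, hS, hZ⟩ W hW
    exact ⟨S, hS, hW.trans hZ⟩
  · rintro Z ⟨S, hS, hZ⟩ W ⟨S', hS', hW⟩
    refine ⟨S ∪ S', hI.union_mem hS hS', union_subset ?_ ?_⟩
    · exact hZ.trans (union_subset_union_right T subset_union_left)
    · exact hW.trans (union_subset_union_right T subset_union_right)

end IsSetIdeal

namespace XEIProcess

variable {X : Type u} (P : XEIProcess X)

lemma notMem_E_of_subset_union {M S S' : Set X} (hS : S ∈ P.Istar) (hS' : S' ∈ P.Istar)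
    (hM : M ⊆ S ∪ S') : M ∉ P.E := fun hME => by
  have hM' : M ∈ P.Istar ∩ P.E :=
    ⟨P.Istar_ideal.mem_of_subset (P.Istar_ideal.union_mem hS hS') hM, hME⟩
  rwa [P.Istar_disjoint_E] at hM'

lemma exists_mem_E_subset_union_of_notMem_Istar {T : Set X} (hT : T ∉ P.Istar) :
    ∃ K ∈ P.E, ∃ S ∈ P.Istar, K ⊆ T ∪ S := by
  by_contra! hE
  have hTne : T.Nonempty := nonempty_iff_ne_empty.2 fun h => hT (h ▸ P.Istar_ideal.empty_mem)
  have huniv : univ ∈ P.E := P.open_mem_E univ P.tau.isOpen_univ (hTne.mono (subset_univ T))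
  have hJ := P.Istar_ideal.adjoin T fun S hS => hE univ huniv S hS
  have hJE : {Z | ∃ S ∈ P.Istar, Z ⊆ T ∪ S} ∩ P.E = ∅ :=
    eq_empty_iff_forall_notMem.2 fun Z ⟨⟨S, hS, hZ⟩, hZE⟩ => hE Z hZE S hS hZ
  have hmax := P.Istar_maximal _ hJ hJE fun S hS => ⟨S, hS, subset_union_right⟩
  exact hT (hmax ▸ ⟨∅, P.Istar_ideal.empty_mem, subset_union_left⟩)

lemma isOpen_taustar_diff {U S : Set X} (hU : P.tau.IsOpen U) (hS : S ∈ P.Istar) :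
    P.taustar.IsOpen (U \ S) := by
  rw [P.taustar_eq]
  exact GenerateOpen.basic _ ⟨U, S, hU, hS, rfl⟩

lemma diff_singleton_notMem_Istar_of_accPt {x : X} {A : Set X}
    (hx : @AccPt X P.taustar x (𝓟 A)) : A \ {x} ∉ P.Istar := fun hA => by
  let _ := P.taustar
  have hopen : IsOpen (univ \ (A \ {x})) := P.isOpen_taustar_diff P.tau.isOpen_univ hA
  have hnhds : univ \ (A \ {x}) ∈ nhds x := hopen.mem_nhds (by simp)
  obtain ⟨y, ⟨⟨-, hy⟩, hyA⟩, hyx⟩ := accPt_iff_nhds.mp hx _ hnhds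
  exact hy ⟨hyA, hyx⟩

end XEIProcess

/-- Lemma 4(2): if `E` satisfies (A_κ), then among `κ` many pairwise disjoint subsets of `X`,
some set has no accumulation points in `τ*`. -/
theorem stmt_6 {X : Type u} (P : XEIProcess X) (κ : Cardinal.{u})
    (hA : PropertyA P.E κ) (ι : Type u) (hι : Cardinal.mk ι = κ) (A : ι → Set X)
    (hdisj : Pairwise (Function.onFun Disjoint A)) :
    ∃ i : ι, ∀ x : X, ¬ @AccPt X P.taustar x (𝓟 (A i)) := by
  by_contra! h
  choose x hx using h
  choose K hKE S hSI hKA using fun i =>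
    P.exists_mem_E_subset_union_of_notMem_Istar (P.diff_singleton_notMem_Istar_of_accPt (hx i))
  have hinter : ∀ i j, i ≠ j → K i ∩ K j ⊆ S i ∪ S j := by
    rintro i j hij z ⟨hzi, hzj⟩
    rcases hKA i hzi with hz | hz
    · rcases hKA j hzj with hz' | hz'
      · exact absurd hz'.1 (disjoint_left.mp (hdisj hij) hz.1)
      · exact Or.inr hz'
    · exact Or.inl hz
  have hinj : Function.Injective K := fun i j hij => by
    by_contra hne
    exact P.notMem_E_of_subset_union (hSI i) (hSI j)
      (by simpa [← hij] using hinter i j hne) (hKE i)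
  obtain ⟨-, ⟨i, rfl⟩, -, ⟨j, rfl⟩, hKij, M, hME, hM⟩ :=
    hA (range K) (range_subset_iff.2 hKE) (by rw [Cardinal.mk_range_eq K hinj, hι])
  exact P.notMem_E_of_subset_union (hSI i) (hSI j)
    (hM.trans (hinter i j fun h => hKij (h ▸ rfl))) hME
end

section
/- Let (X, τ, E, I, I*, τ*) be an XEI-process and let κ ≥ 2 be a cardinal such that the family E satisfies property (A_κ). Then no nonempty subspace Y of (X, τ*) admits κ many pairwise disjoint subsets each of which is dense in Y; in particular, (X, τ*) is hereditarily κ-irresolvable. -/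
open Set Filter TopologicalSpace

universe u

/-- Lemma 4(3): if `E` satisfies (A_κ) (κ ≥ 2), then no nonempty subspace `Y` of `(X, τ*)`
has `κ` many pairwise disjoint subsets each dense in `Y`; i.e. `(X, τ*)` is hereditarily
`κ`-irresolvable. -/
theorem stmt_7 {X : Type u} (P : XEIProcess X) (κ : Cardinal.{u}) (hκ : 2 ≤ κ)
    (hA : PropertyA P.E κ) (Y : Set X) (hY : Y.Nonempty) :
    ¬ ∃ (ι : Type u) (A : ι → Set X), Cardinal.mk ι = κ ∧ (∀ i, A i ⊆ Y) ∧
        Pairwise (Function.onFun Disjoint A) ∧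
        ∀ i, @Dense ↥Y (TopologicalSpace.induced Subtype.val P.taustar)
          (Subtype.val ⁻¹' A i) := by
  classical
  rintro ⟨ι, A, hι, hAY, hdisj, hdense⟩
  obtain ⟨y0, hy0⟩ := hY
  have hnt : Nontrivial ι := by
    rw [← Cardinal.one_lt_iff_nontrivial, hι]
    exact lt_of_lt_of_le (by norm_num) hκ
  -- transfer density to the ambient space
  have hdense' : ∀ (i : ι) (V : Set X), P.taustar.IsOpen V → ∀ y ∈ Y, y ∈ V →
      ∃ x, x ∈ V ∩ A i ∧ x ∈ Y := by
    intro i V hV y hyY hyV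
    letI := TopologicalSpace.induced (Subtype.val : Y → X) P.taustar
    have hU : IsOpen ((Subtype.val : Y → X) ⁻¹' V) := ⟨V, hV, rfl⟩
    obtain ⟨z, hz1, hz2⟩ := (hdense i).inter_open_nonempty _ hU ⟨⟨y, hyY⟩, hyV⟩
    exact ⟨z.val, ⟨hz1, hz2⟩, z.property⟩
  obtain ⟨hd, hu, he, hx⟩ := P.Istar_ideal
  -- no A i belongs to I*
  have hAnot : ∀ i, A i ∉ P.Istar := by
    intro i hAi
    obtain ⟨j, hji⟩ := exists_ne i
    obtain ⟨y, ⟨_, hyAj⟩, hyY⟩ := hdense' j univ P.taustar.isOpen_univ y0 hy0 trivial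
    have hyni : y ∉ A i := fun h => Set.disjoint_left.mp (hdisj hji) hyAj h
    have hVopen : P.taustar.IsOpen (univ \ A i) := by
      rw [P.taustar_eq]
      exact TopologicalSpace.GenerateOpen.basic _ ⟨univ, A i, P.tau.isOpen_univ, hAi, rfl⟩
    obtain ⟨x, ⟨hxV, hxA⟩, _⟩ := hdense' i (univ \ A i) hVopen y hyY ⟨trivial, hyni⟩
    exact hxV.2 hxA
  -- maximality: each A i almost contains a member of E
  have hexK : ∀ i, ∃ K ∈ P.E, ∃ S ∈ P.Istar, K ⊆ A i ∪ S := by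
    intro i
    by_contra hcon
    push_neg at hcon
    set J : Set (Set X) := {T | ∃ S ∈ P.Istar, T ⊆ A i ∪ S} with hJdef
    have hJideal : IsSetIdeal J := by
      refine ⟨?_, ?_, ⟨∅, he, empty_subset _⟩, ?_⟩
      · rintro T ⟨S, hS, hTS⟩ T' hT'
        exact ⟨S, hS, hT'.trans hTS⟩
      · rintro T ⟨S1, hS1, hT1⟩ T' ⟨S2, hS2, hT2⟩
        refine ⟨S1 ∪ S2, hu _ hS1 _ hS2, ?_⟩
        intro x hxmem
        rcases hxmem with hx1 | hx2
        · rcases hT1 hx1 with h | h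
          · exact Or.inl h
          · exact Or.inr (Or.inl h)
        · rcases hT2 hx2 with h | h
          · exact Or.inl h
          · exact Or.inr (Or.inr h)
      · rintro ⟨S, hS, hsub⟩
        exact hcon univ (P.open_mem_E univ P.tau.isOpen_univ ⟨y0, trivial⟩) S hS hsub
    have hJE : J ∩ P.E = ∅ := by
      rw [Set.eq_empty_iff_forall_notMem]
      rintro T ⟨⟨S, hS, hsub⟩, hTE⟩
      exact hcon T hTE S hS hsub
    have hIJ : P.Istar ⊆ J := fun T hT => ⟨T, hT, subset_union_right⟩
    have hJeq : J = P.Istar := P.Istar_maximal J hJideal hJE hIJ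
    have : A i ∈ J := ⟨∅, he, by simp⟩
    rw [hJeq] at this
    exact hAnot i this
  choose K hKE S hSI hKsub using hexK
  -- auxiliary: members of E are not in I*
  have hEnotI : ∀ T ∈ P.E, T ∉ P.Istar := by
    intro T hTE hTI
    have : T ∈ P.Istar ∩ P.E := ⟨hTI, hTE⟩
    rw [P.Istar_disjoint_E] at this
    exact this
  -- K is injective
  have hKinj : Function.Injective K := by
    intro a b hab
    by_contra hne
    have h1 : K a ⊆ A a ∪ S a := hKsub a
    have h2 : K a ⊆ A b ∪ S b := hab ▸ hKsub b
    have hsub : K a ⊆ S a ∪ S b := by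
      intro x hxmem
      rcases h1 hxmem with hxa | hxs
      · rcases h2 hxmem with hxb | hxs'
        · exact (Set.disjoint_left.mp (hdisj hne) hxa hxb).elim
        · exact Or.inr hxs'
      · exact Or.inl hxs
    exact hEnotI (K a) (hKE a) (hd _ (hu _ (hSI a) _ (hSI b)) _ hsub)
  -- apply property (A_κ)
  have hrangesub : Set.range K ⊆ P.E := by
    rintro _ ⟨i, rfl⟩; exact hKE i
  have hrangecard : Cardinal.mk (Set.range K) = κ := by
    rw [Cardinal.mk_range_eq K hKinj, hι]
  obtain ⟨Ka, hKa, Kb, hKb, hKL, M, hME, hMsub⟩ := hA (Set.range K) hrangesub hrangecard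
  obtain ⟨a, rfl⟩ := hKa
  obtain ⟨b, rfl⟩ := hKb
  have hab : a ≠ b := fun h => hKL (congrArg K h)
  have hMsub' : M ⊆ S a ∪ S b := by
    intro x hxM
    have hx1 := hKsub a ((hMsub hxM).1)
    have hx2 := hKsub b ((hMsub hxM).2)
    rcases hx1 with hxa | hxs
    · rcases hx2 with hxb | hxs'
      · exact (Set.disjoint_left.mp (hdisj hab) hxa hxb).elim
      · exact Or.inr hxs'
    · exact Or.inl hxs
  exact hEnotI M hME (hd _ (hu _ (hSI a) _ (hSI b)) _ hMsub')
end

section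
/- If A ⊆ ℝ is Lebesgue measurable with μ(A) > 0, then A contains an element of the family 𝓛. -/
open Set Filter MeasureTheory

/-- The family `𝓛` of all nonempty Lebesgue measurable sets `K ⊆ ℝ` such that every open
set meeting `K` does so in positive Lebesgue measure. -/
def MemCalL (K : Set ℝ) : Prop :=
  K.Nonempty ∧ NullMeasurableSet K volume ∧
    ∀ U : Set ℝ, IsOpen U → (K ∩ U = ∅ ∨ 0 < volume (K ∩ U))

/-!
The set `K = A ∩ supp (μ|_A)` works. Since the space is hereditarily Lindelöf, the support of
`μ|_A` is conull for `μ|_A`, so `K` differs from `A` by a null set; and a point of `K` lies in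
the support, so each of its open neighbourhoods `U` has `0 < μ (A ∩ U) = μ (K ∩ U)`.
-/

namespace MeasureTheory.Measure

variable {X : Type*} [TopologicalSpace X] [MeasurableSpace X] [OpensMeasurableSpace X]
  {μ : Measure X} {A : Set X}

theorem measure_inter_pos_of_mem_support_restrict {x : X} (hx : x ∈ (μ.restrict A).support)
    {U : Set X} (hU : IsOpen U) (hxU : x ∈ U) : 0 < μ (A ∩ U) := by
  have := (mem_support_iff_forall x).1 hx U (hU.mem_nhds hxU)
  rwa [restrict_apply hU.measurableSet, inter_comm] at this

variable [HereditarilyLindelofSpace X]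

theorem inter_support_restrict_ae_eq : (A ∩ (μ.restrict A).support : Set X) =ᵐ[μ] A := by
  rw [← sdiff_compl, sdiff_ae_eq_self, inter_comm,
    ← restrict_apply isOpen_compl_support.measurableSet]
  exact measure_compl_support

theorem exists_subset_forall_isOpen_inter_eq_empty_or_pos (hA : NullMeasurableSet A μ)
    (hpos : 0 < μ A) :
    ∃ K ⊆ A, K.Nonempty ∧ NullMeasurableSet K μ ∧
      ∀ U : Set X, IsOpen U → K ∩ U = ∅ ∨ 0 < μ (K ∩ U) := by
  have hK : (A ∩ (μ.restrict A).support : Set X) =ᵐ[μ] A := inter_support_restrict_ae_eq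
  refine ⟨A ∩ (μ.restrict A).support, inter_subset_left, ?_, hA.congr hK.symm, fun U hU => ?_⟩
  · exact nonempty_of_measure_ne_zero ((measure_congr hK).trans_ne hpos.ne')
  · refine (eq_empty_or_nonempty _).imp_right fun ⟨x, ⟨_, hx⟩, hxU⟩ => ?_
    rw [measure_congr (ae_eq_set_inter hK (ae_eq_refl U))]
    exact measure_inter_pos_of_mem_support_restrict hx hU hxU

end MeasureTheory.Measure

/-- Proposition 6: every Lebesgue measurable set of positive measure contains
an element of `𝓛`. -/
theorem stmt_8 (A : Set ℝ) (hA : NullMeasurableSet A volume) (hpos : 0 < volume A) :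
    ∃ K : Set ℝ, MemCalL K ∧ K ⊆ A := by
  obtain ⟨K, hKA, hK⟩ := Measure.exists_subset_forall_isOpen_inter_eq_empty_or_pos hA hpos
  exact ⟨K, hK, hKA⟩
end

section
/- For every K ∈ 𝓛 there is a set L ⊆ K such that L ∈ 𝓛 and L is nowhere dense in K with respect to the Euclidean subspace topology on K. -/
open Set Filter MeasureTheory

open scoped ENNReal

/-!
Thicken a countable dense subset of `K` to an open set `G` of measure smaller than `μ K`. Then
`K \ G` still has positive measure, and it is nowhere dense in `K` because `G` is open and dense
in `K`. Discarding from `K \ G` the points having a null neighbourhood in it changes it only by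
a null set (by inner regularity), and leaves a set that meets every open set either not at all
or in positive measure.
-/

lemma isNowhereDense_preimage_compl {X : Type*} [TopologicalSpace X] {K G : Set X}
    (hG : IsOpen G) (hdense : Dense (Subtype.val ⁻¹' G : Set K)) :
    IsNowhereDense (Subtype.val ⁻¹' Gᶜ : Set K) :=
  (isClosed_isNowhereDense_iff_compl.mpr
    ⟨by simpa using hG.preimage continuous_subtype_val, by simpa using hdense⟩).2

namespace MeasureTheory.Measure

variable {X : Type*} [TopologicalSpace X] [MeasurableSpace X] {μ : Measure X}

lemma IsEverywherePos.measure_inter_pos {s U : Set X} (hs : μ.IsEverywherePos s)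
    (hU : IsOpen U) (hsU : (s ∩ U).Nonempty) : 0 < μ (s ∩ U) := by
  obtain ⟨x, hxs, hxU⟩ := hsU
  exact hs x hxs _ (inter_mem_nhdsWithin s (hU.mem_nhds hxU))

lemma exists_isOpen_dense_subtype_measure_lt [μ.OuterRegular] [NullSingletonClass μ]
    (K : Set X) [TopologicalSpace.SeparableSpace K] {ε : ℝ≥0∞} (hε : 0 < ε) :
    ∃ G : Set X, IsOpen G ∧ Dense (Subtype.val ⁻¹' G : Set K) ∧ μ G < ε := by
  obtain ⟨D, hDc, hD⟩ := TopologicalSpace.exists_countable_dense K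
  have hnull : μ (Subtype.val '' D) = 0 := (hDc.image _).measure_zero μ
  obtain ⟨G, hDG, hG, hGε⟩ := Set.exists_isOpen_lt_of_lt _ ε (hnull ▸ hε)
  exact ⟨G, hG, hD.mono (image_subset_iff.mp hDG), hGε⟩

lemma exists_subset_isEverywherePos_isNowhereDense [OpensMeasurableSpace X] [μ.InnerRegular]
    [μ.OuterRegular] [NullSingletonClass μ] {K : Set X} [TopologicalSpace.SeparableSpace K]
    (hKm : NullMeasurableSet K μ) (hKpos : 0 < μ K) :
    ∃ L ⊆ K, MeasurableSet L ∧ 0 < μ L ∧ μ.IsEverywherePos L ∧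
      IsNowhereDense (Subtype.val ⁻¹' L : Set K) := by
  obtain ⟨K', hK'K, hK'm, hK'ae⟩ := hKm.exists_measurable_subset_ae_eq
  obtain ⟨ε, hε, hεK⟩ := exists_between hKpos
  obtain ⟨G, hG, hGdense, hGε⟩ := exists_isOpen_dense_subtype_measure_lt (μ := μ) K hε
  have hL₀m : MeasurableSet (K' \ G) := hK'm.diff hG.measurableSet
  have hL₀pos : 0 < μ (K' \ G) :=
    calc 0 < μ K' - μ G := tsub_pos_of_lt (by rw [measure_congr hK'ae]; exact hGε.trans hεK)
      _ ≤ μ (K' \ G) := le_measure_sdiff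
  refine ⟨μ.everywherePosSubset (K' \ G),
    (everywherePosSubset_subset _ _).trans (sdiff_subset.trans hK'K), hL₀m.everywherePosSubset,
    by rwa [measure_congr (everywherePosSubset_ae_eq hL₀m)],
    isEverywherePos_everywherePosSubset hL₀m, ?_⟩
  refine (isNowhereDense_preimage_compl hG hGdense).mono (preimage_mono ?_)
  exact (everywherePosSubset_subset _ _).trans fun x hx => hx.2

end MeasureTheory.Measure

/-- Proposition 7: every `K ∈ 𝓛` contains a set `L ∈ 𝓛` which is nowhere dense in the
subspace `K` (with the Euclidean subspace topology). -/
theorem stmt_9 (K : Set ℝ) (hK : MemCalL K) :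
    ∃ L : Set ℝ, L ⊆ K ∧ MemCalL L ∧
      IsNowhereDense (Subtype.val ⁻¹' L : Set ↥K) := by
  obtain ⟨hne, hKm, hKopen⟩ := hK
  have hKpos : 0 < volume K := by
    simpa [hne.ne_empty] using hKopen univ isOpen_univ
  obtain ⟨L, hLK, hLm, hLpos, hLev, hLnd⟩ :=
    Measure.exists_subset_isEverywherePos_isNowhereDense hKm hKpos
  refine ⟨L, hLK, ⟨nonempty_of_measure_ne_zero hLpos.ne', hLm.nullMeasurableSet, fun U hU => ?_⟩,
    hLnd⟩
  rcases (L ∩ U).eq_empty_or_nonempty with h | h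
  · exact Or.inl h
  · exact Or.inr (hLev.measure_inter_pos hU h)
end

section
/- The family 𝓛 satisfies property (A_{ω₁}); equivalently, every subfamily H ⊆ 𝓛 such that for all distinct K, L ∈ H the intersection K ∩ L contains no element of 𝓛 is countable. -/
open Set Filter MeasureTheory

/-! Every null-measurable set `A` of positive measure contains a member of `𝓛`, namely
`A ∩ supp (volume.restrict A)`: it differs from `A` by a null set because `ℝ` is hereditarily
Lindelöf. Hence two members of `𝓛` whose intersection contains no member of `𝓛` are almost
disjoint, and in a σ-finite measure space a family of pairwise almost disjoint sets of positive
measure is countable. -/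

section SelfSupporting

variable {X : Type*} [TopologicalSpace X] [MeasurableSpace X] [OpensMeasurableSpace X]

lemma inter_support_restrict_ae_eq [HereditarilyLindelofSpace X] (μ : Measure X) (A : Set X) :
    (A ∩ (μ.restrict A).support : Set X) =ᵐ[μ] A := by
  refine ae_eq_set.2 ⟨by rw [sdiff_eq_empty.2 inter_subset_left, measure_empty], ?_⟩
  rw [sdiff_self_inter, sdiff_eq, inter_comm, ← Measure.restrict_apply
    Measure.isOpen_compl_support.measurableSet]
  exact Measure.measure_compl_support

lemma measure_inter_pos_of_mem_support_restrict {μ : Measure X} {A : Set X} {x : X}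
    (hx : x ∈ (μ.restrict A).support) {U : Set X} (hU : IsOpen U) (hxU : x ∈ U) :
    0 < μ (A ∩ U) := by
  have hpos := (Measure.mem_support_iff_forall x).1 hx U (hU.mem_nhds hxU)
  rwa [Measure.restrict_apply hU.measurableSet, inter_comm] at hpos

end SelfSupporting

lemma exists_memCalL_subset {A : Set ℝ} (hA : NullMeasurableSet A volume)
    (hpos : 0 < volume A) : ∃ M, MemCalL M ∧ M ⊆ A := by
  set M : Set ℝ := A ∩ (volume.restrict A).support
  have hMA : M =ᵐ[volume] A := inter_support_restrict_ae_eq volume A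
  refine ⟨M, ⟨nonempty_of_measure_ne_zero (μ := volume) ?_, hA.congr hMA.symm, fun U hU => ?_⟩,
    inter_subset_left⟩
  · rw [measure_congr hMA]
    exact hpos.ne'
  · rcases eq_empty_or_nonempty (M ∩ U) with h | ⟨x, ⟨-, hx⟩, hxU⟩
    · exact .inl h
    · rw [measure_congr (ae_eq_set_inter hMA (ae_eq_refl U))]
      exact .inr (measure_inter_pos_of_mem_support_restrict hx hU hxU)

lemma MemCalL.volume_pos {K : Set ℝ} (hK : MemCalL K) : 0 < volume K := by
  simpa [hK.1.ne_empty] using hK.2.2 univ isOpen_univ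

lemma aedisjoint_of_not_exists_memCalL_subset {K L : Set ℝ} (hK : MemCalL K) (hL : MemCalL L)
    (h : ¬ ∃ M, MemCalL M ∧ M ⊆ K ∩ L) : AEDisjoint volume K L := by
  by_contra hKL
  exact h (exists_memCalL_subset (hK.2.1.inter hL.2.1) (pos_iff_ne_zero.2 hKL))

lemma Set.Countable.of_pairwise_aedisjoint {α : Type*} [MeasurableSpace α] {μ : Measure α}
    [SFinite μ] {S : Set (Set α)} (hm : ∀ s ∈ S, NullMeasurableSet s μ)
    (hpos : ∀ s ∈ S, 0 < μ s) (hd : S.Pairwise (AEDisjoint μ)) : S.Countable := by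
  have hcount := Measure.countable_meas_pos_of_disjoint_iUnion₀ (As := ((↑) : S → Set α))
    (fun s => hm s s.2) (fun s t hst => hd s.2 t.2 (Subtype.coe_ne_coe.2 hst))
  rw [← countable_coe_iff, ← countable_univ_iff]
  simpa [fun s : S => hpos s s.2] using hcount

lemma countable_of_pairwise_not_exists_memCalL_subset {H : Set (Set ℝ)}
    (hH : H ⊆ {K | MemCalL K})
    (hpair : ∀ K ∈ H, ∀ L ∈ H, K ≠ L → ¬ ∃ M, MemCalL M ∧ M ⊆ K ∩ L) : H.Countable :=
  .of_pairwise_aedisjoint (fun _ hK => (hH hK).2.1) (fun _ hK => (hH hK).volume_pos)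
    fun K hK L hL hKL => aedisjoint_of_not_exists_memCalL_subset (hH hK) (hH hL)
      (hpair K hK L hL hKL)

/-- Proposition 8: the family `𝓛` satisfies property (A_{ω₁}): among any `ω₁` many members
there are two distinct ones whose intersection contains a member of `𝓛`. Equivalently,
every subfamily of `𝓛` in which pairwise intersections contain no member of `𝓛`
is countable. -/
theorem stmt_10 :
    (∀ H ⊆ {K : Set ℝ | MemCalL K}, Cardinal.mk H = Cardinal.aleph 1 →
      ∃ K ∈ H, ∃ L ∈ H, K ≠ L ∧ ∃ M : Set ℝ, MemCalL M ∧ M ⊆ K ∩ L) ∧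
    (∀ H ⊆ {K : Set ℝ | MemCalL K},
      (∀ K ∈ H, ∀ L ∈ H, K ≠ L → ¬ ∃ M : Set ℝ, MemCalL M ∧ M ⊆ K ∩ L) →
      H.Countable) := by
  refine ⟨fun H hH hcard => ?_, fun H hH => countable_of_pairwise_not_exists_memCalL_subset hH⟩
  by_contra! hpair
  have hle := (countable_of_pairwise_not_exists_memCalL_subset hH
    fun K hK L hL hKL ⟨M, hM, hMKL⟩ => hpair K hK L hL hKL M hM hMKL).le_aleph0
  exact (hcard ▸ Cardinal.aleph0_lt_aleph_one).not_ge hle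
end

section
/- For every K ∈ 𝓛 there are pairwise disjoint sets L_n ∈ 𝓛 (n ∈ ω) such that ⋃_{n∈ω} L_n ⊆ K and every L_n is dense in K with respect to the Euclidean subspace topology on K. -/
open Set Filter MeasureTheory

/-!
Let `E_V = K ∩ V` for the members `V` of a countable basis of ℝ that meet `K`; these are
countably many sets of positive measure. Because Lebesgue measure has positive subsets of
arbitrarily small measure, from a set `R` of positive measure one can remove a positive part
while leaving positive measure in every `E_V`. Iterating this along an enumeration of `ℕ × {V}` yields pairwise disjoint
positive pieces `A_{n,V} ⊆ E_V`, and `L_n = ⋃_V A_{n,V}` meets every open set that meets `K`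
in positive measure.
-/

open Function
open scoped ENNReal

/-- For σ-finite measures this is equivalent to having no atoms. -/
def MeasureTheory.Measure.HasArbitrarilySmallSubsets {α : Type*} [MeasurableSpace α]
    (μ : Measure α) : Prop :=
  ∀ ⦃s : Set α⦄, MeasurableSet s → 0 < μ s → ∀ ⦃δ : ℝ≥0∞⦄, 0 < δ →
    ∃ t ⊆ s, MeasurableSet t ∧ 0 < μ t ∧ μ t < δ

theorem Real.volume_hasArbitrarilySmallSubsets :
    (volume : Measure ℝ).HasArbitrarilySmallSubsets := by
  intro s hs hpos δ hδ
  obtain ⟨r, hr0, hrδ⟩ := ENNReal.lt_iff_exists_nnreal_btwn.1 hδ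
  have hr : (0 : ℝ) < r := by exact_mod_cast hr0
  have hcover : s = ⋃ n : ℤ, s ∩ Ico (n • (r : ℝ)) ((n + 1) • (r : ℝ)) := by
    rw [← inter_iUnion, iUnion_Ico_zsmul hr, inter_univ]
  obtain ⟨n, hn⟩ := exists_measure_pos_of_not_measure_iUnion_null (hcover ▸ hpos.ne')
  refine ⟨_, inter_subset_left, hs.inter measurableSet_Ico, hn, ?_⟩
  calc volume (s ∩ Ico (n • (r : ℝ)) ((n + 1) • (r : ℝ)))
      ≤ volume (Ico (n • (r : ℝ)) ((n + 1) • (r : ℝ))) := measure_mono inter_subset_right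
    _ = r := by simp [Real.volume_Ico, add_smul]
    _ < δ := hrδ

namespace MeasureTheory.Measure.HasArbitrarilySmallSubsets

variable {α : Type*} [MeasurableSpace α] {μ : Measure α}

/-- Remove from `R` small pieces `G k ⊆ E k` whose measures have sum `< μ R`. -/
theorem exists_subset_forall_measure_diff_pos (hμ : μ.HasArbitrarilySmallSubsets)
    {ι : Type*} [Countable ι] {R : Set α} (hR : MeasurableSet R) (hRpos : 0 < μ R)
    {E : ι → Set α} (hE : ∀ k, MeasurableSet (E k)) (hEpos : ∀ k, 0 < μ (E k)) :
    ∃ A ⊆ R, MeasurableSet A ∧ 0 < μ A ∧ ∀ k, 0 < μ (E k \ A) := by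
  obtain ⟨ε, hεpos, hεsum⟩ := ENNReal.exists_pos_sum_of_countable' hRpos.ne' ι
  choose G hGE hGm hGpos hGlt using fun k => hμ (hE k) (hEpos k) (hεpos k)
  have hG : μ (⋃ k, G k) < μ R :=
    calc μ (⋃ k, G k) ≤ ∑' k, μ (G k) := measure_iUnion_le G
      _ ≤ ∑' k, ε k := ENNReal.tsum_le_tsum fun k => (hGlt k).le
      _ < μ R := hεsum
  refine ⟨R \ ⋃ k, G k, sdiff_subset, hR.diff (.iUnion hGm), ?_, fun k => ?_⟩
  · exact (tsub_pos_of_lt hG).trans_le le_measure_sdiff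
  · refine (hGpos k).trans_le (measure_mono fun x hx => ⟨hGE k hx, fun hxA => ?_⟩)
    exact hxA.2 (mem_iUnion_of_mem k hx)

theorem exists_pairwise_disjoint_subsets (hμ : μ.HasArbitrarilySmallSubsets) {F : ℕ → Set α}
    (hF : ∀ j, MeasurableSet (F j)) (hFpos : ∀ j, 0 < μ (F j)) :
    ∃ A : ℕ → Set α, (∀ j, A j ⊆ F j) ∧ (∀ j, MeasurableSet (A j)) ∧ (∀ j, 0 < μ (A j)) ∧
      Pairwise (Disjoint on A) := by
  -- `A j` is cut out of `F j` minus the union `S` of the earlier pieces, keeping the invariant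
  -- that `S` leaves positive measure in every `F i`.
  let Good (S : Set α) : Prop := MeasurableSet S ∧ ∀ i, 0 < μ (F i \ S)
  have step (S : Set α) (hS : Good S) (j : ℕ) :
      ∃ A ⊆ F j \ S, MeasurableSet A ∧ 0 < μ A ∧ Good (S ∪ A) := by
    obtain ⟨A, hAsub, hAm, hApos, hAdiff⟩ := hμ.exists_subset_forall_measure_diff_pos
      ((hF j).diff hS.1) (hS.2 j) (fun i => (hF i).diff hS.1) hS.2
    exact ⟨A, hAsub, hAm, hApos, hS.1.union hAm, fun i => sdiff_sdiff ▸ hAdiff i⟩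
  choose piece hpiece_sub hpiece_m hpiece_pos hpiece_good using step
  let S : ℕ → {S // Good S} := fun j => Nat.rec ⟨∅, .empty, by simpa using hFpos⟩
    (fun j T => ⟨T.1 ∪ piece T.1 T.2 j, hpiece_good T.1 T.2 j⟩) j
  let A j := piece (S j).1 (S j).2 j
  have hS_mono : Monotone fun j => (S j).1 :=
    monotone_nat_of_le_succ fun j => subset_union_left
  refine ⟨A, fun j => (hpiece_sub _ _ j).trans sdiff_subset, fun j => hpiece_m _ _ j,
    fun j => hpiece_pos _ _ j, (pairwise_disjoint_on A).2 fun i j hij => ?_⟩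
  have hAi : A i ⊆ (S j).1 := subset_union_right.trans (hS_mono hij)
  exact disjoint_left.2 fun x hxi hxj => (hpiece_sub _ _ j hxj).2 (hAi hxi)

theorem exists_pairwise_disjoint_forall_measure_inter_pos (hμ : μ.HasArbitrarilySmallSubsets)
    {ι : Type*} [Countable ι] {E : ι → Set α} (hE : ∀ k, MeasurableSet (E k))
    (hEpos : ∀ k, 0 < μ (E k)) :
    ∃ P : ℕ → Set α, (∀ n, MeasurableSet (P n)) ∧ Pairwise (Disjoint on P) ∧
      ∀ n k, 0 < μ (P n ∩ E k) := by
  rcases isEmpty_or_nonempty ι with hι | hι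
  · exact ⟨fun _ => ∅, fun _ => .empty, fun _ _ _ => disjoint_bot_left,
      fun _ k => isEmptyElim k⟩
  obtain ⟨e, he⟩ := exists_surjective_nat ι
  obtain ⟨A, hAE, hAm, hApos, hAdisj⟩ := hμ.exists_pairwise_disjoint_subsets
    (F := fun j => E (e j.unpair.2)) (fun j => hE _) (fun j => hEpos _)
  refine ⟨fun n => ⋃ m, A (Nat.pair n m), fun n => .iUnion fun m => hAm _, ?_, fun n k => ?_⟩
  · refine fun n n' hnn' => disjoint_iUnion_left.2 fun m => disjoint_iUnion_right.2 fun m' => ?_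
    exact hAdisj fun h => hnn' (Nat.pair_eq_pair.1 h).1
  · obtain ⟨m, rfl⟩ := he k
    refine (hApos (Nat.pair n m)).trans_le
      (measure_mono fun x hx => ⟨mem_iUnion_of_mem m hx, ?_⟩)
    simpa using hAE _ hx

end MeasureTheory.Measure.HasArbitrarilySmallSubsets

theorem dense_preimage_val_of_forall_inter_nonempty {X : Type*} [TopologicalSpace X] {K L : Set X}
    (hLK : L ⊆ K) (h : ∀ U, IsOpen U → (K ∩ U).Nonempty → (L ∩ U).Nonempty) :
    Dense (Subtype.val ⁻¹' L : Set K) := by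
  rw [Subtype.dense_iff, Subtype.image_preimage_val, inter_eq_right.2 hLK]
  intro x hx
  rw [mem_closure_iff]
  intro U hU hxU
  simpa [inter_comm] using h U hU ⟨x, hx, hxU⟩

theorem memCalL_of_subset {K L : Set ℝ} (hK : K.Nonempty) (hLK : L ⊆ K)
    (hL : NullMeasurableSet L volume)
    (hLpos : ∀ U, IsOpen U → (K ∩ U).Nonempty → 0 < volume (L ∩ U)) : MemCalL L := by
  refine ⟨?_, hL, fun U hU => or_iff_not_imp_left.2 fun hLU => ?_⟩
  · simpa using nonempty_of_measure_ne_zero (hLpos univ isOpen_univ (by simpa using hK)).ne'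
  · obtain ⟨x, hxL, hxU⟩ := nonempty_iff_ne_empty.2 hLU
    exact hLpos U hU ⟨x, hLK hxL, hxU⟩

/-- Lemma 10: every `K ∈ 𝓛` contains countably many pairwise disjoint sets `L n ∈ 𝓛`,
each dense in the subspace `K` (with the Euclidean subspace topology). -/
theorem stmt_11 (K : Set ℝ) (hK : MemCalL K) :
    ∃ L : ℕ → Set ℝ, Pairwise (Function.onFun Disjoint L) ∧
      (∀ n : ℕ, MemCalL (L n)) ∧ (⋃ n : ℕ, L n) ⊆ K ∧
      ∀ n : ℕ, Dense (Subtype.val ⁻¹' (L n) : Set ↥K) := by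
  obtain ⟨hKne, hKm, hKopen⟩ := hK
  obtain ⟨K', hK'K, hK'm, hK'ae⟩ := hKm.exists_measurable_subset_ae_eq
  obtain ⟨b, hbc, -, hb⟩ := TopologicalSpace.exists_countable_basis ℝ
  let B := {V ∈ b | (K ∩ V).Nonempty}
  have : Countable B := (hbc.mono (sep_subset _ _)).to_subtype
  have hBpos (V : B) : 0 < volume (K' ∩ V) := by
    rw [measure_congr (hK'ae.inter (ae_eq_refl (V : Set ℝ)))]
    exact (hKopen V (hb.isOpen V.2.1)).resolve_left V.2.2.ne_empty
  obtain ⟨P, hPm, hPdisj, hPpos⟩ :=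
    Real.volume_hasArbitrarilySmallSubsets.exists_pairwise_disjoint_forall_measure_inter_pos
      (fun V : B => hK'm.inter (hb.isOpen V.2.1).measurableSet) hBpos
  have hLK n : K' ∩ P n ⊆ K := inter_subset_left.trans hK'K
  have hLpos n U (hU : IsOpen U) (hKU : (K ∩ U).Nonempty) : 0 < volume (K' ∩ P n ∩ U) := by
    obtain ⟨x, hxK, hxU⟩ := hKU
    obtain ⟨V, hVb, hxV, hVU⟩ := hb.exists_subset_of_mem_open hxU hU
    refine (hPpos n ⟨V, hVb, x, hxK, hxV⟩).trans_le (measure_mono ?_)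
    exact fun y ⟨hyP, hyK', hyV⟩ => ⟨⟨hyK', hyP⟩, hVU hyV⟩
  refine ⟨fun n => K' ∩ P n, pairwise_disjoint_mono hPdisj fun n => inter_subset_right,
    fun n => memCalL_of_subset hKne (hLK n) (hK'm.inter (hPm n)).nullMeasurableSet (hLpos n),
    iUnion_subset hLK, fun n => dense_preimage_val_of_forall_inter_nonempty (hLK n) ?_⟩
  exact fun U hU hKU => nonempty_of_measure_ne_zero (hLpos n U hU hKU).ne'
end

section
/- Every Hausdorff Fréchet–Urysohn space has open disjoint tightness. -/
/-!
A point `x` accumulating at an open set `U` is the limit of a sequence in `U \ {x}`. In a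
Hausdorff space one can pass to a subsequence whose terms have pairwise disjoint open
neighbourhoods: each new term is taken inside neighbourhoods of `x` disjoint from chosen
neighbourhoods of all earlier terms. Intersected with `U`, the union of these neighbourhoods over
the even indices and the one over the odd indices are disjoint, and both accumulate at `x`.
-/

open Set Filter

/-- A space has open disjoint tightness (ODT) if every accumulation point of an open set `U`
is an accumulation point of two disjoint open subsets of `U`. -/
def HasODT (X : Type*) [TopologicalSpace X] : Prop :=
  ∀ U : Set X, IsOpen U → ∀ x : X, AccPt x (𝓟 U) →
    ∃ U₁ U₂ : Set X, IsOpen U₁ ∧ IsOpen U₂ ∧ U₁ ⊆ U ∧ U₂ ⊆ U ∧ U₁ ∩ U₂ = ∅ ∧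
      AccPt x (𝓟 U₁) ∧ AccPt x (𝓟 U₂)

open Function Topology

theorem accPt_of_tendsto {X ι : Type*} [TopologicalSpace X] {l : Filter ι} [l.NeBot]
    {v : ι → X} {C : Set X} {x : X} (hv : Tendsto v l (𝓝 x)) (hvC : ∀ i, v i ∈ C \ {x}) :
    AccPt x (𝓟 C) :=
  accPt_principal_iff_clusterPt.2 <| mem_closure_iff_clusterPt.1 <|
    mem_closure_of_tendsto hv (Eventually.of_forall hvC)

theorem disjoint_iUnion_comp_of_ne {α ι κ : Type*} {W : ι → Set α}
    (hW : Pairwise (Disjoint on W)) {f g : κ → ι} (hfg : ∀ m n, f m ≠ g n) :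
    Disjoint (⋃ m, W (f m)) (⋃ n, W (g n)) := by
  simp only [disjoint_iUnion_left, disjoint_iUnion_right]
  exact fun n m => hW (hfg m n)

theorem Filter.Tendsto.exists_strictMono_pairwise_disjoint_isOpen {X : Type*}
    [TopologicalSpace X] [T2Space X] {u : ℕ → X} {x : X} (hu : Tendsto u atTop (𝓝 x))
    (hne : ∀ n, u n ≠ x) :
    ∃ (φ : ℕ → ℕ) (W : ℕ → Set X), StrictMono φ ∧ (∀ m, IsOpen (W m)) ∧
      (∀ m, u (φ m) ∈ W m) ∧ Pairwise (Disjoint on W) := by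
  choose O V hO hV huO hxV hOV using fun n => t2_separation (hne n)
  obtain ⟨φ, -, hφ⟩ := exists_seq_of_forall_finset_exists (fun _ => True)
    (fun i j => i < j ∧ u j ∈ V i) fun s _ => by
      have hev : ∀ᶠ k in atTop, (∀ i ∈ s, i < k) ∧ ∀ i ∈ s, u k ∈ V i :=
        (s.eventually_all.2 fun i _ => eventually_gt_atTop i).and <|
          s.eventually_all.2 fun i _ => hu.eventually ((hV i).mem_nhds (hxV i))
      obtain ⟨k, hk, hkV⟩ := hev.exists
      exact ⟨k, trivial, fun i hi => ⟨hk i hi, hkV i hi⟩⟩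
  refine ⟨φ, fun m => O (φ m) ∩ ⋂ i ∈ Finset.range m, V (φ i), fun m n h => (hφ m n h).1,
    fun m => (hO _).inter (isOpen_biInter_finset fun i _ => hV _),
    fun m => ⟨huO _, mem_iInter₂.2 fun i hi => (hφ i m (Finset.mem_range.1 hi)).2⟩, ?_⟩
  refine pairwise_disjoint_on _ |>.2 fun m n hmn => ?_
  exact (hOV (φ m)).mono inter_subset_left
    (inter_subset_right.trans (biInter_subset_of_mem (Finset.mem_range.2 hmn)))

/-- Proposition 13: every Hausdorff Fréchet–Urysohn space has open disjoint tightness. -/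
theorem stmt_14 (X : Type*) [TopologicalSpace X] [T2Space X] [FrechetUrysohnSpace X] :
    HasODT X := by
  intro U hU x hx
  obtain ⟨u, huU, hux⟩ := mem_closure_iff_seq_limit.1 <|
    mem_closure_iff_clusterPt.2 (accPt_principal_iff_clusterPt.1 hx)
  obtain ⟨φ, W, hφ, hWo, huW, hWd⟩ :=
    hux.exists_strictMono_pairwise_disjoint_isOpen fun n => (huU n).2
  have half (ψ : ℕ → ℕ) (hψ : StrictMono ψ) :
      IsOpen (U ∩ ⋃ m, W (ψ m)) ∧ AccPt x (𝓟 (U ∩ ⋃ m, W (ψ m))) :=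
    ⟨hU.inter (isOpen_iUnion fun m => hWo _),
      accPt_of_tendsto (hux.comp (hφ.comp hψ).tendsto_atTop) fun m =>
        ⟨⟨(huU _).1, mem_iUnion.2 ⟨m, huW _⟩⟩, (huU _).2⟩⟩
  obtain ⟨hU₁, hx₁⟩ := half (2 * ·) (strictMono_mul_left_of_pos two_pos)
  obtain ⟨hU₂, hx₂⟩ := half (2 * · + 1) fun a b h => by dsimp only; omega
  refine ⟨_, _, hU₁, hU₂, inter_subset_left, inter_subset_left, ?_, hx₁, hx₂⟩
  exact ((disjoint_iUnion_comp_of_ne hWd fun m n => by omega).mono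
    inter_subset_right inter_subset_right).inter_eq
end

section
/- Let L be a topological space such that the countable power L^ω is c.c.c. Then for every cardinal κ and every open set U ⊆ L^κ (with the product topology) there is an open set V ⊆ U which is dense in U and is determined by a countable subset of κ. -/
open Set Filter TopologicalSpace

/-- A space is c.c.c. if every family of pairwise disjoint nonempty open sets is countable. -/
def CCC (X : Type*) [TopologicalSpace X] : Prop :=
  ∀ 𝒰 : Set (Set X), (∀ U ∈ 𝒰, IsOpen U ∧ U.Nonempty) →
    𝒰.Pairwise (fun U V => Disjoint U V) → 𝒰.Countable

/-- A set `M ⊆ ι` determines `A ⊆ L^ι` if points of `A` and points outside `A` differ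
somewhere on `M`. -/
def Determines {ι L : Type*} (M : Set ι) (A : Set (ι → L)) : Prop :=
  ∀ x ∈ A, ∀ y ∉ A, ∃ m ∈ M, x m ≠ y m

/-!
A maximal pairwise disjoint family `𝒲` of nonempty basic open boxes inside `U` has a union `V`
dense in `U`, and `V` is determined by the union of the (finite) supports of the boxes in `𝒲`.
So everything reduces to the countability of `𝒲`, i.e. to `L^ι` being c.c.c. For this, given an
uncountable disjoint family of boxes, the Δ-system lemma yields an uncountable subfamily whose
supports pairwise meet in one finite root `R`. Two disjoint boxes must already be disjoint in a
coordinate they share, so the projections of the subfamily to `L^R` stay pairwise disjoint, which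
contradicts the c.c.c. of `L^R`, a continuous image of `L^ω`.
-/

section Combinatorics

variable {β ι : Type*}

theorem Set.exists_maximal_pairwiseDisjoint {α : Type*} [PartialOrder α] [OrderBot α]
    (S : Set β) (f : β → α) :
    ∃ J ⊆ S, J.PairwiseDisjoint f ∧
      ∀ a ∈ S, (∀ b ∈ J, Disjoint (f a) (f b)) → a ∈ J := by
  obtain ⟨J, hJ⟩ := zorn_subset {J | J ⊆ S ∧ J.PairwiseDisjoint f} fun c hc hchain =>
    ⟨⋃₀ c, ⟨sUnion_subset fun J hJ => (hc hJ).1,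
      (hchain.pairwiseDisjoint_sUnion f).2 fun J hJ => (hc hJ).2⟩,
      fun _ => subset_sUnion_of_mem⟩
  refine ⟨J, hJ.prop.1, hJ.prop.2, fun a ha hdisj => hJ.mem_of_prop_insert ?_⟩
  exact ⟨insert_subset ha hJ.prop.1, hJ.prop.2.insert fun b hb _ => hdisj b hb⟩

theorem exists_uncountable_pairwiseDisjoint {S : Set β} (hS : ¬S.Countable) {f : β → Set ι}
    (hf : ∀ a ∈ S, (f a).Countable) (hfiber : ∀ x, {a ∈ S | x ∈ f a}.Countable) :
    ∃ J ⊆ S, ¬J.Countable ∧ J.PairwiseDisjoint f := by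
  obtain ⟨J, hJS, hJ, hmax⟩ := S.exists_maximal_pairwiseDisjoint f
  refine ⟨J, hJS, fun hJc => hS ?_, hJ⟩
  have hsupp : (⋃ b ∈ J, f b).Countable := hJc.biUnion fun b hb => hf b (hJS hb)
  have hcover : S ⊆ J ∪ ⋃ x ∈ ⋃ b ∈ J, f b, {a ∈ S | x ∈ f a} := by
    intro a ha
    by_cases hmeet : ∀ b ∈ J, Disjoint (f a) (f b)
    · exact Or.inl (hmax a ha hmeet)
    · push Not at hmeet
      obtain ⟨b, hb, hab⟩ := hmeet
      obtain ⟨x, hxa, hxb⟩ := not_disjoint_iff.1 hab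
      exact Or.inr (mem_biUnion (mem_biUnion hb hxb) ⟨ha, hxa⟩)
  exact (hJc.union (hsupp.biUnion fun x _ => hfiber x)).mono hcover

theorem exists_uncountable_deltaSystem_of_card_eq [DecidableEq ι] (n : ℕ) {S : Set β}
    (f : β → Finset ι) (hcard : ∀ a ∈ S, (f a).card = n) (hS : ¬S.Countable) :
    ∃ J ⊆ S, ¬J.Countable ∧ ∃ R, J.Pairwise fun a b => f a ∩ f b = R := by
  induction n generalizing S f with
  | zero =>
    refine ⟨S, subset_rfl, hS, ∅, fun a ha _ _ _ => ?_⟩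
    simp [Finset.card_eq_zero.1 (hcard a ha)]
  | succ n ih =>
    by_cases hfat : ∃ x, ¬{a ∈ S | x ∈ f a}.Countable
    · obtain ⟨x, hx⟩ := hfat
      obtain ⟨J, hJS, hJ, R, hR⟩ := ih (fun a => (f a).erase x)
        (fun a ha => by rw [Finset.card_erase_of_mem ha.2, hcard a ha.1, Nat.add_sub_cancel]) hx
      refine ⟨J, fun a ha => (hJS ha).1, hJ, insert x R, fun a ha b hb hab => ?_⟩
      have hxab : x ∈ f a ∩ f b := Finset.mem_inter.2 ⟨(hJS ha).2, (hJS hb).2⟩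
      rw [← hR ha hb hab, Finset.erase_inter, Finset.inter_erase, Finset.erase_idem,
        Finset.insert_erase hxab]
    · push Not at hfat
      obtain ⟨J, hJS, hJ, hdisj⟩ := exists_uncountable_pairwiseDisjoint hS
        (f := fun a => (f a : Set ι)) (fun a _ => (f a).countable_toSet) hfat
      exact ⟨J, hJS, hJ, ∅, fun a ha b hb hab =>
        Finset.disjoint_iff_inter_eq_empty.1 (Finset.disjoint_coe.1 (hdisj ha hb hab))⟩

theorem exists_uncountable_deltaSystem [DecidableEq ι] {S : Set β} (hS : ¬S.Countable)
    (f : β → Finset ι) :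
    ∃ J ⊆ S, ¬J.Countable ∧ ∃ R, J.Pairwise fun a b => f a ∩ f b = R := by
  obtain ⟨n, hn⟩ : ∃ n, ¬{a ∈ S | (f a).card = n}.Countable := by
    by_contra! h
    exact hS ((countable_iUnion h).mono fun a ha => by simpa using ha)
  obtain ⟨J, hJS, hJ⟩ := exists_uncountable_deltaSystem_of_card_eq n f (fun a ha => ha.2) hn
  exact ⟨J, fun a ha => (hJS ha).1, hJ⟩

end Combinatorics

theorem Set.exists_disjoint_of_disjoint_pi {ι : Type*} {α : ι → Type*} {s t : Set ι}
    {u v : ∀ i, Set (α i)} (hu : (s.pi u).Nonempty) (hv : (t.pi v).Nonempty)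
    (h : Disjoint (s.pi u) (t.pi v)) : ∃ i ∈ s ∩ t, Disjoint (u i) (v i) := by
  classical
  obtain ⟨x, hx⟩ := hu
  obtain ⟨y, hy⟩ := hv
  rw [← pi_univ_ite s u, ← pi_univ_ite t v, disjoint_univ_pi] at h
  obtain ⟨i, hi⟩ := h
  by_cases his : i ∈ s <;> by_cases hit : i ∈ t <;>
    simp only [his, hit, if_true, if_false, univ_disjoint, disjoint_univ] at hi
  · exact ⟨i, ⟨his, hit⟩, hi⟩
  · exact absurd (hi ▸ hx i his) (notMem_empty _)
  · exact absurd (hi ▸ hy i hit) (notMem_empty _)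
  · exact (univ_eq_empty_iff.1 hi).elim (x i)

section Determines

variable {ι L : Type*} {M N : Set ι}

theorem determines_pi (I : Set ι) (u : ι → Set L) : Determines I (I.pi u) := by
  intro x hx y hy
  obtain ⟨i, hi, hyi⟩ : ∃ i ∈ I, y i ∉ u i := by simpa [Set.mem_pi] using hy
  exact ⟨i, hi, fun h => hyi (h ▸ hx i hi)⟩

theorem Determines.mono {A : Set (ι → L)} (h : Determines M A) (hMN : M ⊆ N) :
    Determines N A := fun x hx y hy => (h x hx y hy).imp fun _ hm => ⟨hMN hm.1, hm.2⟩

theorem determines_biUnion {β : Type*} {J : Set β} {A : β → Set (ι → L)}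
    (h : ∀ b ∈ J, Determines M (A b)) : Determines M (⋃ b ∈ J, A b) := by
  intro x hx y hy
  obtain ⟨b, hb, hxb⟩ := mem_iUnion₂.1 hx
  exact h b hb x hxb y fun hyb => hy (mem_biUnion hb hyb)

end Determines

namespace CCC

variable {X Y : Type*} [TopologicalSpace X] [TopologicalSpace Y]

theorem countable_of_isOpen (hX : CCC X) {β : Type*} {s : β → Set X} {a : Set β}
    (h : a.PairwiseDisjoint s) (ho : ∀ i ∈ a, IsOpen (s i))
    (hne : ∀ i ∈ a, (s i).Nonempty) : a.Countable := by
  have hinj : InjOn s a := fun i hi j hj hij => by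
    obtain ⟨x, hx⟩ := hne i hi
    exact h.elim_set hi hj x hx (hij ▸ hx)
  refine countable_of_injective_of_countable_image hinj (hX _ ?_ ?_)
  · rintro _ ⟨i, hi, rfl⟩
    exact ⟨ho i hi, hne i hi⟩
  · rintro _ ⟨i, hi, rfl⟩ _ ⟨j, hj, rfl⟩ hij
    exact h hi hj (ne_of_apply_ne s hij)

theorem of_subsingleton [Subsingleton X] : CCC X := fun _ h𝒰 _ =>
  Subsingleton.countable fun U hU V hV => (h𝒰 U hU).2.eq_univ.trans (h𝒰 V hV).2.eq_univ.symm

theorem of_surjective (hX : CCC X) {f : X → Y} (hf : Continuous f)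
    (hsurj : Function.Surjective f) : CCC Y := fun _ h𝒰 hd =>
  hX.countable_of_isOpen (s := fun V => f ⁻¹' V)
    (fun _ hV _ hW hVW => (hd hV hW hVW).preimage f)
    (fun V hV => (h𝒰 V hV).1.preimage hf) fun V hV => (h𝒰 V hV).2.preimage hsurj

theorem pi_of_countable {L : Type*} [TopologicalSpace L] (κ : Type*) [Countable κ]
    (h : CCC (ℕ → L)) : CCC (κ → L) := by
  rcases isEmpty_or_nonempty L with hL | hL
  · exact of_subsingleton
  · obtain ⟨e, he⟩ := exists_injective_nat κ
    exact h.of_surjective (f := fun x => x ∘ e) (by fun_prop) he.surjective_comp_right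

theorem pi {L : Type*} [TopologicalSpace L] (h : CCC (ℕ → L)) (ι : Type*) :
    CCC (ι → L) := by
  classical
  intro 𝒰 h𝒰 hd
  by_contra h𝒰c
  have hbox : ∀ W ∈ 𝒰, ∃ I : Finset ι, ∃ u : ι → Set L,
      (∀ i ∈ I, IsOpen (u i)) ∧ ((I : Set ι).pi u).Nonempty ∧ (I : Set ι).pi u ⊆ W := by
    intro W hW
    obtain ⟨x, hx⟩ := (h𝒰 W hW).2
    obtain ⟨I, u, hu, hsub⟩ := isOpen_pi_iff.1 (h𝒰 W hW).1 x hx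
    exact ⟨I, u, fun i hi => (hu i hi).1, ⟨x, fun i hi => (hu i hi).2⟩, hsub⟩
  choose! I u hu hne hsub using hbox
  obtain ⟨J, hJ𝒰, hJ, R, hR⟩ := exists_uncountable_deltaSystem h𝒰c I
  have hRsub : ∀ W ∈ J, R ⊆ I W := fun W hW => by
    obtain ⟨V, hV, hVW⟩ := (not_subsingleton_iff.1 fun hs => hJ hs.countable).exists_ne W
    exact hR hW hV hVW.symm ▸ Finset.inter_subset_left
  refine hJ ((pi_of_countable R h).countable_of_isOpen
    (s := fun W => univ.pi fun i : R => u W i) ?_ ?_ ?_)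
  · intro W hW V hV hWV
    obtain ⟨i, hi, hdisj⟩ :=
      exists_disjoint_of_disjoint_pi (hne W (hJ𝒰 hW)) (hne V (hJ𝒰 hV))
      ((hd (hJ𝒰 hW) (hJ𝒰 hV) hWV).mono (hsub W (hJ𝒰 hW)) (hsub V (hJ𝒰 hV)))
    rw [← Finset.coe_inter, hR hW hV hWV] at hi
    exact disjoint_univ_pi.2 ⟨⟨i, hi⟩, hdisj⟩
  · exact fun W hW => isOpen_set_pi finite_univ fun i _ =>
      hu W (hJ𝒰 hW) i (hRsub W hW i.2)
  · intro W hW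
    obtain ⟨x, hx⟩ := hne W (hJ𝒰 hW)
    exact ⟨fun i => x i, fun i _ => hx i (hRsub W hW i.2)⟩

end CCC

/-- Proposition 16: if `L^ω` is c.c.c., then every open set `U` in a power `L^ι` contains
an open subset `V` which is dense in `U` and determined by a countable set of coordinates. -/
theorem stmt_15 (L : Type*) [TopologicalSpace L] (hccc : CCC (ℕ → L))
    (ι : Type*) (U : Set (ι → L)) (hU : IsOpen U) :
    ∃ V : Set (ι → L), V ⊆ U ∧ IsOpen V ∧ Dense (Subtype.val ⁻¹' V : Set ↥U) ∧
      ∃ M : Set ι, M.Countable ∧ Determines M V := by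
  let box : Finset ι × (ι → Set L) → Set (ι → L) := fun p => (p.1 : Set ι).pi p.2
  let S := {p | (∀ i ∈ p.1, IsOpen (p.2 i)) ∧ (box p).Nonempty ∧ box p ⊆ U}
  obtain ⟨J, hJS, hJ, hJmax⟩ := S.exists_maximal_pairwiseDisjoint box
  have hopen : ∀ p ∈ J, IsOpen (box p) := fun p hp => isOpen_set_pi p.1.finite_toSet (hJS hp).1
  have hJc : J.Countable := (hccc.pi ι).countable_of_isOpen hJ hopen fun p hp => (hJS hp).2.1
  refine ⟨⋃ p ∈ J, box p, iUnion₂_subset fun p hp => (hJS hp).2.2, isOpen_biUnion hopen, ?_,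
    ⋃ p ∈ J, (p.1 : Set ι), hJc.biUnion fun p _ => p.1.countable_toSet,
    determines_biUnion fun p hp => (determines_pi _ _).mono
      (subset_biUnion_of_mem (u := fun p : Finset ι × _ => (p.1 : Set ι)) hp)⟩
  rw [Subtype.dense_iff, Subtype.image_preimage_coe]
  refine fun x hx => mem_closure_iff.2 fun O hO hxO => ?_
  obtain ⟨I, u, hu, hIu⟩ := isOpen_pi_iff.1 (hU.inter hO) x ⟨hx, hxO⟩
  have hxIu : x ∈ box (I, u) := fun i hi => (hu i hi).2
  obtain ⟨p, hp, hmeet⟩ : ∃ p ∈ J, ¬Disjoint (box (I, u)) (box p) := by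
    by_contra! hdisj
    have hIuS : (I, u) ∈ S :=
      ⟨fun i hi => (hu i hi).1, ⟨x, hxIu⟩, hIu.trans inter_subset_left⟩
    exact (hdisj _ (hJmax _ hIuS hdisj)).ne_of_mem hxIu hxIu rfl
  obtain ⟨z, hzIu, hzp⟩ := not_disjoint_iff.1 hmeet
  exact ⟨z, (hIu hzIu).2, (hIu hzIu).1, mem_biUnion hp hzp⟩
end

section
/- Let L be a Hausdorff first countable topological space such that L^ω is c.c.c. Then for every cardinal κ the product space L^κ has open disjoint tightness. -/
open Set Filter TopologicalSpace

/-!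
A first countable Hausdorff space has open disjoint tightness: an accumulation point `y` of an
open set `V` is the limit of a sequence of pairwise disjoint nonempty open "rings"
`(V ∩ W m) \ closure (W m')` cut out of a countable neighbourhood basis `W` of `y`, and the rings
of even and of odd index give the two halves.

For `L^ι`, let `x` accumulate at the open set `U`. Closing off under countably many choices
(one point of `U \ {x}` in each basic neighbourhood of `x` with finite support `F`, together with
the support of a box around it inside `U` and a coordinate where it differs from `x`) yields a
countable `J ⊆ ι` and an open `V ⊆ L^J` with `x|J` accumulating at `V` and the cylinder over `V`
inside `U`. Since `L^J` is first countable and Hausdorff, it has ODT, and ODT pulls back along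
the restriction `L^ι → L^J`, which has the continuous section "extend by `x`".
-/

open Function
open scoped Topology

section Split

variable {X : Type*} [TopologicalSpace X]

def HasDisjointAccSplit (U : Set X) (x : X) : Prop :=
  ∃ U₁ U₂ : Set X, IsOpen U₁ ∧ IsOpen U₂ ∧ U₁ ⊆ U ∧ U₂ ⊆ U ∧ U₁ ∩ U₂ = ∅ ∧
    AccPt x (𝓟 U₁) ∧ AccPt x (𝓟 U₂)

lemma accPt_iUnion_of_tendsto_smallSets {R : ℕ → Set X} {y : X}
    (hR : Tendsto R atTop (𝓝 y).smallSets) (hne : ∀ n, (R n).Nonempty) (hy : ∀ n, y ∉ R n) :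
    AccPt y (𝓟 (⋃ n, R n)) := by
  rw [accPt_iff_nhds]
  intro N hN
  obtain ⟨n, hn⟩ := (tendsto_smallSets_iff.1 hR N hN).exists
  obtain ⟨z, hz⟩ := hne n
  exact ⟨z, ⟨hn hz, mem_iUnion_of_mem n hz⟩, fun h => hy n (h ▸ hz)⟩

lemma hasDisjointAccSplit_of_tendsto_smallSets {V : Set X} {y : X} {R : ℕ → Set X}
    (hRo : ∀ n, IsOpen (R n)) (hRV : ∀ n, R n ⊆ V) (hRd : Pairwise (Disjoint on R))
    (hR : Tendsto R atTop (𝓝 y).smallSets) (hne : ∀ n, (R n).Nonempty) (hy : ∀ n, y ∉ R n) :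
    HasDisjointAccSplit V y := by
  have hacc : ∀ φ : ℕ → ℕ, (∀ n, n ≤ φ n) → AccPt y (𝓟 (⋃ n, R (φ n))) := fun φ hφ =>
    accPt_iUnion_of_tendsto_smallSets (hR.comp (tendsto_atTop_mono hφ tendsto_id))
      (fun n => hne _) (fun n => hy _)
  refine ⟨⋃ n, R (2 * n), ⋃ n, R (2 * n + 1), isOpen_iUnion fun n => hRo _,
    isOpen_iUnion fun n => hRo _, iUnion_subset fun n => hRV _, iUnion_subset fun n => hRV _,
    ?_, hacc _ fun n => by omega, hacc _ fun n => by omega⟩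
  exact (disjoint_iUnion_left.2 fun a => disjoint_iUnion_right.2 fun b =>
    hRd (by omega)).inter_eq

lemma exists_disjoint_open_seq_tendsto_smallSets [T2Space X] [FirstCountableTopology X]
    {V : Set X} (hV : IsOpen V) {y : X} (hy : AccPt y (𝓟 V)) :
    ∃ R : ℕ → Set X, (∀ n, IsOpen (R n)) ∧ (∀ n, R n ⊆ V) ∧ Pairwise (Disjoint on R) ∧
      Tendsto R atTop (𝓝 y).smallSets ∧ (∀ n, (R n).Nonempty) ∧ ∀ n, y ∉ R n := by
  obtain ⟨W, hWo, hW⟩ := (nhds_basis_opens y).exists_antitone_subbasis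
  have step : ∀ m, ∃ m', m < m' ∧ ((V ∩ W m) \ closure (W m')).Nonempty := by
    intro m
    obtain ⟨p, ⟨hpW, hpV⟩, hpy⟩ := accPt_iff_nhds.1 hy _ (hW.mem m)
    obtain ⟨P, ⟨hpP, hPo⟩, i, -, hPW⟩ :=
      ((nhds_basis_opens p).disjoint_iff hW.toHasBasis).1 (disjoint_nhds_nhds.2 hpy)
    refine ⟨max i (m + 1), by omega, p, ⟨hpV, hpW⟩, fun hcl => ?_⟩
    exact disjoint_left.1 (hPW.closure_right hPo) hpP
      (closure_mono (hW.antitone (le_max_left _ _)) hcl)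
  choose next hlt hne using step
  set m : ℕ → ℕ := fun n => next^[n] 0
  have hm_succ : ∀ n, m (n + 1) = next (m n) := fun n => iterate_succ_apply' _ _ _
  have hm : StrictMono m := strictMono_nat_of_lt_succ fun n => hm_succ n ▸ hlt _
  refine ⟨fun n => (V ∩ W (m n)) \ closure (W (m (n + 1))),
    fun n => (hV.inter (hWo _).2).sdiff isClosed_closure, fun n z hz => hz.1.1, ?_,
    (hW.tendsto_smallSets.comp hm.tendsto_atTop).smallSets_mono
      (Eventually.of_forall fun n z hz => hz.1.2),
    fun n => by simp only [hm_succ]; exact hne _, fun n hz => hz.2 (subset_closure (hWo _).1)⟩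
  refine (pairwise_disjoint_on _).2 fun a b hab => disjoint_left.2 fun z hza hzb => hza.2 ?_
  exact subset_closure (hW.antitone (hm.monotone hab) hzb.1.2)

theorem hasODT_of_firstCountableTopology [T2Space X] [FirstCountableTopology X] : HasODT X :=
  fun V hV y hy => by
    obtain ⟨R, hRo, hRV, hRd, hR, hne, hyR⟩ := exists_disjoint_open_seq_tendsto_smallSets hV hy
    exact hasDisjointAccSplit_of_tendsto_smallSets hRo hRV hRd hR hne hyR

variable {Y : Type*} [TopologicalSpace Y] {r : X → Y} {e : Y → X} {x : X}

lemma AccPt.preimage_of_leftInverse (he : Continuous e) (hre : LeftInverse r e)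
    (hex : e (r x) = x) {V : Set Y} (h : AccPt (r x) (𝓟 V)) : AccPt x (𝓟 (r ⁻¹' V)) := by
  rw [accPt_iff_frequently] at h ⊢
  rw [← hex]
  exact (he.tendsto (r x)).frequently <| h.mono fun v hv =>
    ⟨fun hvx => hv.1 ((hre v).symm.trans ((congrArg r hvx).trans (hre (r x)))),
      show r (e v) ∈ V from (hre v).symm ▸ hv.2⟩

theorem HasODT.hasDisjointAccSplit_of_retraction (hY : HasODT Y) (hr : Continuous r)
    (he : Continuous e) (hre : LeftInverse r e) (hex : e (r x) = x) {U : Set X}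
    {V : Set Y} (hV : IsOpen V) (hVU : r ⁻¹' V ⊆ U) (hx : AccPt (r x) (𝓟 V)) :
    HasDisjointAccSplit U x := by
  obtain ⟨V₁, V₂, hV₁, hV₂, hV₁V, hV₂V, hdisj, hx₁, hx₂⟩ := hY V hV (r x) hx
  exact ⟨r ⁻¹' V₁, r ⁻¹' V₂, hV₁.preimage hr, hV₂.preimage hr, (preimage_mono hV₁V).trans hVU,
    (preimage_mono hV₂V).trans hVU, by rw [← preimage_inter, hdisj, preimage_empty],
    hx₁.preimage_of_leftInverse he hre hex, hx₂.preimage_of_leftInverse he hre hex⟩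

end Split

lemma exists_countable_finset_closed {ι : Type*} (g : Finset ι → Set ι)
    (hg : ∀ F, (g F).Countable) :
    ∃ J : Set ι, J.Countable ∧ ∀ F : Finset ι, (F : Set ι) ⊆ J → g F ⊆ J := by
  set step : Set ι → Set ι := fun S => S ∪ ⋃ (F : Finset ι) (_ : (F : Set ι) ⊆ S), g F
  have hstep : ∀ S, S.Countable → (step S).Countable := fun S hS => by
    have hfin : {F : Finset ι | (F : Set ι) ⊆ S}.Countable :=
      ((countable_ofPred_finite_subset hS).preimage Finset.coe_injective).mono
        fun F hF => show (F : Set ι) ∈ {t | t.Finite ∧ t ⊆ S} from ⟨F.finite_toSet, hF⟩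
    exact hS.union (hfin.biUnion fun F _ => hg F)
  have hmono : Monotone fun n => step^[n] ∅ := monotone_nat_of_le_succ fun n => by
    rw [iterate_succ_apply']
    exact subset_union_left
  refine ⟨⋃ n, step^[n] ∅, countable_iUnion fun n => ?_, fun F hF => ?_⟩
  · induction n with
    | zero => exact countable_empty
    | succ n ih => rw [iterate_succ_apply']; exact hstep _ ih
  · obtain ⟨n, hn⟩ := hmono.directed_le.exists_mem_subset_of_finset_subset_biUnion hF
    refine subset_iUnion_of_subset (n + 1) ?_
    rw [iterate_succ_apply']
    exact subset_union_of_subset_right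
      (subset_iUnion₂ (s := fun (F : Finset ι) (_ : (F : Set ι) ⊆ step^[n] ∅) => g F) F hn) _

namespace Set

variable {ι : Type*} {π : ι → Type*} (J : Set ι) (x : ∀ i, π i)

open Classical in
noncomputable def extendPi (v : ∀ j : J, π j) : ∀ i, π i :=
  fun i => if h : i ∈ J then v ⟨i, h⟩ else x i

variable {J x}

lemma extendPi_of_mem (v : ∀ j : J, π j) {i : ι} (h : i ∈ J) : J.extendPi x v i = v ⟨i, h⟩ :=
  dif_pos h

lemma extendPi_of_notMem (v : ∀ j : J, π j) {i : ι} (h : i ∉ J) : J.extendPi x v i = x i :=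
  dif_neg h

variable (J x)

lemma domRestrict_extendPi : LeftInverse J.domRestrict (J.extendPi x) := fun v =>
  funext fun j => extendPi_of_mem v j.2

lemma extendPi_domRestrict_self : J.extendPi x (J.domRestrict x) = x := funext fun i => by
  by_cases h : i ∈ J
  · exact extendPi_of_mem _ h
  · exact extendPi_of_notMem _ h

lemma continuous_extendPi [∀ i, TopologicalSpace (π i)] : Continuous (J.extendPi x) :=
  continuous_pi fun i => by
    by_cases h : i ∈ J
    · simp only [extendPi, dif_pos h]; exact continuous_apply _
    · simp only [extendPi, dif_neg h]; exact continuous_const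

variable {J x}

lemma extendPi_domRestrict_mem_pi_iff {T : Set ι} (hT : T ⊆ J) {O : ∀ i, Set (π i)}
    (w : ∀ i, π i) : J.extendPi x (J.domRestrict w) ∈ T.pi O ↔ w ∈ T.pi O := by
  refine forall₂_congr fun i hi => ?_
  rw [extendPi_of_mem _ (hT hi), domRestrict_apply]

end Set

section Product

variable {ι : Type*} {π : ι → Type*} [∀ i, TopologicalSpace (π i)]

lemma exists_finset_pi_subset_domRestrict_preimage {x : ∀ i, π i} {b : ∀ i, ℕ → Set (π i)}
    (hb : ∀ i, (𝓝 (x i)).HasAntitoneBasis (b i)) {J : Set ι} {W : Set (∀ j : J, π j)}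
    (hW : W ∈ 𝓝 (J.domRestrict x)) :
    ∃ F : Finset ι, (F : Set ι) ⊆ J ∧
      ∃ k, (F : Set ι).pi (fun i => b i k) ⊆ J.domRestrict ⁻¹' W := by
  rw [nhds_pi, Filter.mem_pi'] at hW
  obtain ⟨I, t, ht, hIW⟩ := hW
  choose k hk using fun j : J => (hb j).mem_iff.1 (ht j)
  refine ⟨I.map (Embedding.subtype _), by simp, I.sup k, fun w hw => hIW fun j hj => ?_⟩
  have hwj : w j ∈ b j (I.sup k) := hw j (Finset.mem_map_of_mem _ hj)
  exact hk j ((hb j).antitone (Finset.le_sup hj) hwj)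

theorem exists_countable_domRestrict_preimage_subset [∀ i, FirstCountableTopology (π i)]
    {U : Set (∀ i, π i)} (hU : IsOpen U) {x : ∀ i, π i} (hx : AccPt x (𝓟 U)) :
    ∃ J : Set ι, J.Countable ∧ ∃ V : Set (∀ j : J, π j), IsOpen V ∧
      J.domRestrict ⁻¹' V ⊆ U ∧ AccPt (J.domRestrict x) (𝓟 V) := by
  choose b hb using fun i => (𝓝 (x i)).exists_antitone_basis
  choose y hy hyx using fun (F : Finset ι) (k : ℕ) => accPt_iff_nhds.1 hx _
    (set_pi_mem_nhds F.finite_toSet fun i _ => (hb i).mem k)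
  choose T O hTO hTU using fun F k => isOpen_pi_iff.1 hU (y F k) (hy F k).2
  choose i₀ hi₀ using fun F k => ne_iff.1 (hyx F k)
  obtain ⟨J, hJ, hJF⟩ := exists_countable_finset_closed
    (fun F => ⋃ k, insert (i₀ F k) (T F k : Set ι))
    (fun F => countable_iUnion fun k => ((T F k).finite_toSet.insert _).countable)
  have hTJ : ∀ F : Finset ι, (F : Set ι) ⊆ J → ∀ k, (T F k : Set ι) ⊆ J ∧ i₀ F k ∈ J :=
    fun F hF k => insert_subset_iff.1 ((subset_iUnion _ k).trans (hJF F hF)) |>.symm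
  refine ⟨J, hJ, ⋃ (F : Finset ι) (_ : (F : Set ι) ⊆ J) (k : ℕ),
    J.extendPi x ⁻¹' (T F k : Set ι).pi (O F k), ?_, ?_, ?_⟩
  · exact isOpen_iUnion fun F => isOpen_iUnion fun _ => isOpen_iUnion fun k =>
      (isOpen_set_pi (T F k).finite_toSet fun i hi => (hTO F k i hi).1).preimage
        (J.continuous_extendPi x)
  · intro w hw
    simp only [mem_preimage, mem_iUnion] at hw
    obtain ⟨F, hF, k, hwF⟩ := hw
    exact hTU F k ((extendPi_domRestrict_mem_pi_iff (hTJ F hF k).1 w).1 hwF)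
  · rw [accPt_iff_nhds]
    intro W hW
    obtain ⟨F, hF, k, hFW⟩ := exists_finset_pi_subset_domRestrict_preimage hb hW
    refine ⟨J.domRestrict (y F k), ⟨hFW (hy F k).1, mem_iUnion₂.2 ⟨F, hF, mem_iUnion.2 ⟨k,
      (extendPi_domRestrict_mem_pi_iff (hTJ F hF k).1 _).2 fun i hi => (hTO F k i hi).2⟩⟩⟩,
      fun h => hi₀ F k (congrFun h ⟨i₀ F k, (hTJ F hF k).2⟩)⟩

end Product

theorem stmt_16_general (L : Type*) [TopologicalSpace L] [T2Space L]
    [FirstCountableTopology L] (ι : Type*) :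
    HasODT (ι → L) := by
  intro U hU x hx
  obtain ⟨J, hJ, V, hV, hVU, hxV⟩ := exists_countable_domRestrict_preimage_subset hU hx
  have : Countable J := hJ.to_subtype
  exact hasODT_of_firstCountableTopology.hasDisjointAccSplit_of_retraction
    (continuous_pi fun j => continuous_apply _) (J.continuous_extendPi x)
    (J.domRestrict_extendPi x) (J.extendPi_domRestrict_self x) hV hVU hxV

/-- Lemma 17: if `L` is a Hausdorff first countable space and `L^ω` is c.c.c., then every
power `L^ι` has open disjoint tightness. -/
theorem stmt_16 (L : Type*) [TopologicalSpace L] [T2Space L]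
    [FirstCountableTopology L] (hccc : CCC (ℕ → L)) (ι : Type*) :
    HasODT (ι → L) :=
  stmt_16_general L ι
end

section
/- Every dense subspace of a topological space with open disjoint tightness has open disjoint tightness. -/
/-!
Let `U = V ∩ Y` with `V` open in `X`, and let `V₁, V₂ ⊆ V` be disjoint open sets of `X`
accumulating at `x ∈ Y`. Neither contains `x`, since an open set containing `x` meets every set
accumulating at `x`. For an open `W ∌ x`, accumulating at `x` just means `x ∈ closure W`, and
`closure W = closure (W ∩ Y)` because `Y` is dense; so `V₁ ∩ Y` and `V₂ ∩ Y` are the required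
disjoint open subsets of `U`.
-/

open Set Filter

section

variable {X : Type*} [TopologicalSpace X]

theorem accPt_principal_iff_mem_closure_of_notMem {x : X} {s : Set X} (hx : x ∉ s) :
    AccPt x (𝓟 s) ↔ x ∈ closure s := by
  rw [accPt_principal_iff_clusterPt, sdiff_singleton_eq_self hx, mem_closure_iff_clusterPt]

theorem AccPt.notMem_of_isOpen_of_disjoint {x : X} {s t : Set X} (ht : AccPt x (𝓟 t))
    (hs : IsOpen s) (hst : Disjoint s t) : x ∉ s := fun hx =>
  (hst.closure_right hs).notMem_of_mem_left hx (mem_closure_iff_clusterPt.2 ht.clusterPt)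

theorem AccPt.of_preimage_subtype_val {Y : Set X} {x : Y} {s : Set X}
    (h : AccPt x (𝓟 (((↑) : Y → X) ⁻¹' s))) : AccPt (x : X) (𝓟 s) :=
  (h.map continuous_subtype_val.continuousAt Subtype.val_injective).mono <| by
    simpa only [map_principal, principal_mono] using image_preimage_subset _ s

theorem Dense.accPt_preimage_subtype_val {Y : Set X} (hY : Dense Y) {x : Y} {s : Set X}
    (hs : IsOpen s) (hx : (x : X) ∉ s) (h : AccPt (x : X) (𝓟 s)) :
    AccPt x (𝓟 (((↑) : Y → X) ⁻¹' s)) := by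
  rw [accPt_principal_iff_mem_closure_of_notMem hx] at h
  rw [accPt_principal_iff_mem_closure_of_notMem (s := ((↑) : Y → X) ⁻¹' s) hx, closure_subtype,
    image_preimage_eq_inter_range, Subtype.range_coe]
  exact closure_minimal (hY.open_subset_closure_inter hs) isClosed_closure h

end

/-- Proposition 18: every dense subspace of a space with open disjoint tightness has
open disjoint tightness. -/
theorem stmt_17 (X : Type*) [TopologicalSpace X] (h : HasODT X)
    (Y : Set X) (hY : Dense Y) : HasODT ↥Y := by
  intro U hU x hx
  obtain ⟨V, hV, rfl⟩ := isOpen_induced_iff.mp hU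
  obtain ⟨V₁, V₂, hV₁, hV₂, hV₁V, hV₂V, hV₁₂, hx₁, hx₂⟩ := h V hV x hx.of_preimage_subtype_val
  have hdisj : Disjoint V₁ V₂ := disjoint_iff_inter_eq_empty.2 hV₁₂
  refine ⟨_, _, hV₁.preimage continuous_subtype_val, hV₂.preimage continuous_subtype_val,
    preimage_mono hV₁V, preimage_mono hV₂V, by rw [← preimage_inter, hV₁₂, preimage_empty],
    hY.accPt_preimage_subtype_val hV₁ (hx₂.notMem_of_isOpen_of_disjoint hV₁ hdisj) hx₁,
    hY.accPt_preimage_subtype_val hV₂ (hx₁.notMem_of_isOpen_of_disjoint hV₂ hdisj.symm) hx₂⟩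
end

section
/- For a submaximal topological space X, X has disjoint tightness if and only if X has open disjoint tightness. -/
open Set Filter

/-- A space has disjoint tightness if every accumulation point of a set `A` is an
accumulation point of two disjoint subsets of `A`. -/
def HasDT (X : Type*) [TopologicalSpace X] : Prop :=
  ∀ (A : Set X) (x : X), AccPt x (𝓟 A) →
    ∃ A₁ A₂ : Set X, A₁ ⊆ A ∧ A₂ ⊆ A ∧ A₁ ∩ A₂ = ∅ ∧
      AccPt x (𝓟 A₁) ∧ AccPt x (𝓟 A₂)

/-- A space is submaximal if every dense subset is open. -/
def Submaximal (X : Type*) [TopologicalSpace X] : Prop :=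
  ∀ D : Set X, Dense D → IsOpen D

/-!
In a submaximal space every set `A` splits as the open set `A ∩ interior (closure A)` and the
nowhere dense set `A \ interior (closure A)`. A nowhere dense set `N` has no accumulation points
there, since the dense set `Nᶜ ∪ {x}` is an open neighbourhood of `x`. Hence every accumulation
point of `A` is an accumulation point of an open subset of `A`, and this lets one pass between
arbitrary and open witnesses in both directions.
-/

lemma dense_union_compl_closure {X : Type*} [TopologicalSpace X] (s : Set X) :
    Dense (s ∪ (closure s)ᶜ) := by
  refine dense_iff_closure_eq.2 (eq_univ_of_subset ?_ (union_compl_self (closure s)))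
  rw [closure_union]
  exact union_subset_union_right _ subset_closure

lemma isNowhereDense_diff_interior_closure {X : Type*} [TopologicalSpace X] (s : Set X) :
    IsNowhereDense (s \ interior (closure s)) :=
  isNowhereDense_iff_disjoint.2 <| disjoint_left.2 fun _ hy hy' =>
    hy.2 (interior_mono (closure_mono sdiff_subset) hy')

namespace Submaximal

variable {X : Type*} [TopologicalSpace X] (hX : Submaximal X)
include hX

lemma isOpen_inter_interior_closure (s : Set X) : IsOpen (s ∩ interior (closure s)) := by
  convert (hX _ (dense_union_compl_closure s)).inter (isOpen_interior (s := closure s)) using 1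
  ext y
  have := @interior_subset _ _ (closure s) y
  simp only [mem_inter_iff, mem_union, mem_compl_iff]
  tauto

lemma not_accPt_of_isNowhereDense {s : Set X} (hs : IsNowhereDense s) (x : X) :
    ¬ AccPt x (𝓟 s) := by
  intro hx
  have hdense : Dense (sᶜ ∪ {x}) :=
    (interior_eq_empty_iff_dense_compl.1 hs).mono
      ((compl_subset_compl.2 subset_closure).trans subset_union_left)
  obtain ⟨y, ⟨hy | hy, hys⟩, hyx⟩ :=
    accPt_iff_nhds.1 hx _ ((hX _ hdense).mem_nhds (mem_union_right _ rfl))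
  exacts [hy hys, hyx hy]

lemma accPt_inter_interior_closure {s : Set X} {x : X} (hx : AccPt x (𝓟 s)) :
    AccPt x (𝓟 (s ∩ interior (closure s))) := by
  rw [← inter_union_sdiff s (interior (closure s)), ← sup_principal, accPt_sup] at hx
  exact hx.resolve_right (hX.not_accPt_of_isNowhereDense
    (isNowhereDense_diff_interior_closure s) x)

lemma exists_isOpen_subset_accPt {s : Set X} {x : X} (hx : AccPt x (𝓟 s)) :
    ∃ V ⊆ s, IsOpen V ∧ AccPt x (𝓟 V) :=
  ⟨_, inter_subset_left, hX.isOpen_inter_interior_closure s, hX.accPt_inter_interior_closure hx⟩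

end Submaximal

/-- Proposition 19: for a submaximal space, disjoint tightness and open disjoint tightness
are equivalent. -/
theorem stmt_18 (X : Type*) [TopologicalSpace X] (h : Submaximal X) :
    HasDT X ↔ HasODT X := by
  constructor
  · intro hDT U _ x hx
    obtain ⟨A₁, A₂, hA₁, hA₂, hdisj, hx₁, hx₂⟩ := hDT U x hx
    obtain ⟨V₁, hV₁, hV₁o, hxV₁⟩ := h.exists_isOpen_subset_accPt hx₁
    obtain ⟨V₂, hV₂, hV₂o, hxV₂⟩ := h.exists_isOpen_subset_accPt hx₂
    refine ⟨V₁, V₂, hV₁o, hV₂o, hV₁.trans hA₁, hV₂.trans hA₂, ?_, hxV₁, hxV₂⟩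
    exact subset_empty_iff.1 (hdisj ▸ inter_subset_inter hV₁ hV₂)
  · intro hODT A x hx
    obtain ⟨V, hVA, hVo, hxV⟩ := h.exists_isOpen_subset_accPt hx
    obtain ⟨U₁, U₂, -, -, hU₁, hU₂, hdisj, hx₁, hx₂⟩ := hODT V hVo x hxV
    exact ⟨U₁, U₂, hU₁.trans hVA, hU₂.trans hVA, hdisj, hx₁, hx₂⟩
end
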